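/- arXiv:2506.01142 — 4 statements merged into one kernel-verified Lean document; each statement's English description precedes it below -/
import Mathlib

section
/- There exist smooth maps ε₁, ε₂ : ℝ³∖{0} → ℂ³ such that for every k ≠ 0: (i) k·ε₁(k) = 0 and k·ε₂(k) = 0 (transversality), and (ii) {ε₁(k), ε₂(k)} is orthonormal with respect to the standard Hermitian inner product on ℂ³ (⟨εᵢ(k), εⱼ(k)⟩ = δᵢⱼ). In particular, at every k these two vectors form a basis of the two-dimensional complex space {E ∈ ℂ³ : k·E = 0}, i.e. the electromagnetic plasma-wave bundle ζ_EM admits a global smooth orthonormal polarization frame and is topologically trivial. -/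
open scoped BigOperators ComplexConjugate

noncomputable section EMFrameAux

namespace EMFrameAux

def rr (k : Fin 3 → ℝ) : ℝ := Real.sqrt ((k 0)^2 + (k 1)^2 + (k 2)^2)

def vv (k : Fin 3 → ℝ) : Fin 3 → ℂ :=
  ![-((k 1:ℂ)^2+(k 2:ℂ)^2+3*(k 2:ℂ)*(rr k:ℂ)) - (k 0:ℂ)*(k 1:ℂ)*Complex.I,
    (k 0:ℂ)*(k 1:ℂ) + ((k 0:ℂ)^2+(k 2:ℂ)^2-(k 2:ℂ)*(rr k:ℂ))*Complex.I,
    3*(k 0:ℂ)*(rr k:ℂ)+(k 0:ℂ)*(k 2:ℂ) + (k 1:ℂ)*((rr k:ℂ)-(k 2:ℂ))*Complex.I]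

def ww (k : Fin 3 → ℝ) : Fin 3 → ℂ :=
  ![3*(k 0:ℂ)*(k 1:ℂ)*(rr k:ℂ) + ((k 0:ℂ)^2*(k 2:ℂ)+(k 2:ℂ)^3-(k 2:ℂ)^2*(rr k:ℂ)-(k 1:ℂ)^2*(rr k:ℂ)+(k 1:ℂ)^2*(k 2:ℂ))*Complex.I,
    -((k 1:ℂ)^2*(k 2:ℂ)+(k 2:ℂ)^3+3*(k 2:ℂ)^2*(rr k:ℂ)+3*(k 0:ℂ)^2*(rr k:ℂ)+(k 0:ℂ)^2*(k 2:ℂ)) + (k 0:ℂ)*(k 1:ℂ)*(rr k:ℂ)*Complex.I,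
    (k 0:ℂ)^2*(k 1:ℂ)+(k 1:ℂ)^3+(k 1:ℂ)*(k 2:ℂ)^2+3*(k 1:ℂ)*(k 2:ℂ)*(rr k:ℂ) + (-(k 0:ℂ)^3-(k 0:ℂ)*(k 2:ℂ)^2+(k 0:ℂ)*(k 2:ℂ)*(rr k:ℂ)-(k 0:ℂ)*(k 1:ℂ)^2)*Complex.I]

def Qp (k : Fin 3 → ℝ) : ℝ :=
  ((k 1)^2+(k 2)^2+3*(k 2)*rr k)^2 + 2*((k 0)*(k 1))^2 + ((k 0)^2+(k 2)^2-(k 2)*rr k)^2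
    + (3*(k 0)*rr k+(k 0)*(k 2))^2 + ((k 1)*(rr k-(k 2)))^2

def nn (k : Fin 3 → ℝ) : ℝ := Real.sqrt (Qp k)

lemma sumsq_pos {k : Fin 3 → ℝ} (hk : k ≠ 0) : 0 < (k 0)^2 + (k 1)^2 + (k 2)^2 := by
  rcases lt_or_eq_of_le (by positivity : (0:ℝ) ≤ (k 0)^2 + (k 1)^2 + (k 2)^2) with h | h
  · exact h
  · exfalso; apply hk
    have h0 : k 0 ^ 2 = 0 := by nlinarith [sq_nonneg (k 0), sq_nonneg (k 1), sq_nonneg (k 2)]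
    have h1 : k 1 ^ 2 = 0 := by nlinarith [sq_nonneg (k 0), sq_nonneg (k 1), sq_nonneg (k 2)]
    have h2 : k 2 ^ 2 = 0 := by nlinarith [sq_nonneg (k 0), sq_nonneg (k 1), sq_nonneg (k 2)]
    rw [pow_eq_zero_iff two_ne_zero] at h0 h1 h2
    funext i; fin_cases i <;> simp_all

lemma rr_pos {k : Fin 3 → ℝ} (hk : k ≠ 0) : 0 < rr k := Real.sqrt_pos.2 (sumsq_pos hk)

lemma rr_sq (k : Fin 3 → ℝ) : rr k ^ 2 = (k 0)^2 + (k 1)^2 + (k 2)^2 :=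
  Real.sq_sqrt (by positivity)

lemma Qp_pos {k : Fin 3 → ℝ} (hk : k ≠ 0) : 0 < Qp k := by
  have hs := sumsq_pos hk
  have hr := rr_pos hk
  have hr2 := rr_sq k
  set x := k 0; set y := k 1; set z := k 2; set r := rr k with hrdef
  have hexp : Qp k = 10*x^4+12*x^2*y^2+2*y^4+22*x^2*z^2+14*y^2*z^2+12*z^4 + 4*z*r*r^2 := by
    simp only [Qp, ← hrdef]
    linear_combination ((-4 : ℝ)*z*r + (10 : ℝ)*z^2 + y^2 + (9 : ℝ)*x^2) * hr2
  have hr4 : r^4 = (x^2+y^2+z^2)^2 := by rw [show r^4 = (r^2)^2 by ring, hr2]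
  have hzr : z^2*r^2 = z^2*(x^2+y^2+z^2) := by rw [hr2]
  rw [hexp]
  nlinarith [mul_nonneg (sq_nonneg (2*z+r)) (sq_nonneg r), hr4, hzr, mul_pos hs hs,
    sq_nonneg (x*y), sq_nonneg (x*z), sq_nonneg (y*z), sq_nonneg (x^2), sq_nonneg (y^2),
    sq_nonneg (z^2)]

lemma nn_pos {k : Fin 3 → ℝ} (hk : k ≠ 0) : 0 < nn k := Real.sqrt_pos.2 (Qp_pos hk)

lemma cd_proj (i : Fin 3) : ContDiff ℝ (⊤ : ℕ∞) (fun k : Fin 3 → ℝ => k i) :=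
  contDiff_pi.mp contDiff_id i

lemma cdAt_rr {k : Fin 3 → ℝ} (hk : k ≠ 0) : ContDiffAt ℝ (⊤ : ℕ∞) rr k := by
  have hs : (k 0)^2 + (k 1)^2 + (k 2)^2 ≠ 0 := (sumsq_pos hk).ne'
  have hg : ContDiff ℝ (⊤ : ℕ∞) (fun k : Fin 3 → ℝ => (k 0)^2 + (k 1)^2 + (k 2)^2) :=
    (((cd_proj 0).pow 2).add ((cd_proj 1).pow 2)).add ((cd_proj 2).pow 2)
  exact (Real.contDiffAt_sqrt hs).comp k hg.contDiffAt

lemma cdAt_nn {k : Fin 3 → ℝ} (hk : k ≠ 0) : ContDiffAt ℝ (⊤ : ℕ∞) nn k := by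
  have hr := cdAt_rr hk
  have hq : ContDiffAt ℝ (⊤ : ℕ∞) Qp k := by
    unfold Qp
    repeat
      first
      | exact hr
      | exact (cd_proj 0).contDiffAt
      | exact (cd_proj 1).contDiffAt
      | exact (cd_proj 2).contDiffAt
      | exact contDiffAt_const
      | apply ContDiffAt.pow
      | apply ContDiffAt.neg
      | apply ContDiffAt.add
      | apply ContDiffAt.sub
      | apply ContDiffAt.mul
  exact (Real.contDiffAt_sqrt (Qp_pos hk).ne').comp k hq

end EMFrameAux

end EMFrameAux

open EMFrameAux

set_option maxHeartbeats 4000000 in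
set_option maxRecDepth 8000 in
/-- The electromagnetic plasma-wave bundle `ζ_EM` over `ℝ³ ∖ {0}` admits a global smooth
orthonormal polarization frame (hence is topologically trivial): there are smooth maps
`ε₁ ε₂ : ℝ³∖{0} → ℂ³` that at every `k ≠ 0` are transverse (`k·εᵢ(k) = 0`), orthonormal for
the standard Hermitian inner product on `ℂ³`, and span the transverse space
`{E : ℂ³ | k·E = 0}`. -/
theorem em_bundle_global_smooth_orthonormal_frame :
    ∃ ε₁ ε₂ : (Fin 3 → ℝ) → (Fin 3 → ℂ),
      ContDiffOn ℝ (⊤ : ℕ∞) ε₁ {(0 : Fin 3 → ℝ)}ᶜ ∧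
      ContDiffOn ℝ (⊤ : ℕ∞) ε₂ {(0 : Fin 3 → ℝ)}ᶜ ∧
      ∀ k : Fin 3 → ℝ, k ≠ 0 →
        (∑ a, (k a : ℂ) * ε₁ k a = 0) ∧
        (∑ a, (k a : ℂ) * ε₂ k a = 0) ∧
        (∑ a, conj (ε₁ k a) * ε₁ k a = 1) ∧
        (∑ a, conj (ε₂ k a) * ε₂ k a = 1) ∧
        (∑ a, conj (ε₁ k a) * ε₂ k a = 0) ∧
        (∀ E : Fin 3 → ℂ, (∑ a, (k a : ℂ) * E a = 0) →
          ∃ c₁ c₂ : ℂ, E = fun a => c₁ * ε₁ k a + c₂ * ε₂ k a) := by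
  refine ⟨fun k a => vv k a / ((nn k : ℝ):ℂ),
          fun k a => ww k a / ((rr k:ℂ)*((nn k : ℝ):ℂ)), ?_, ?_, ?_⟩
  · refine contDiffOn_pi.2 fun a => fun k hk => ContDiffAt.contDiffWithinAt ?_
    have hk' : k ≠ 0 := by simpa using hk
    have hr : ContDiffAt ℝ (⊤ : ℕ∞) (fun k : Fin 3 → ℝ => ((rr k : ℝ):ℂ)) k :=
      Complex.ofRealCLM.contDiff.contDiffAt.comp k (cdAt_rr hk')
    have hn : ContDiffAt ℝ (⊤ : ℕ∞) (fun k : Fin 3 → ℝ => ((nn k : ℝ):ℂ)) k :=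
      Complex.ofRealCLM.contDiff.contDiffAt.comp k (cdAt_nn hk')
    have hp : ∀ i : Fin 3, ContDiffAt ℝ (⊤ : ℕ∞) (fun k : Fin 3 → ℝ => ((k i : ℝ):ℂ)) k :=
      fun i => (Complex.ofRealCLM.contDiff.comp (cd_proj i)).contDiffAt
    have hn0 : ((nn k : ℝ):ℂ) ≠ 0 := by
      exact_mod_cast (nn_pos hk').ne'
    show ContDiffAt ℝ (⊤ : ℕ∞) (fun x => vv x a / ((nn x : ℝ):ℂ)) k
    simp only [div_eq_mul_inv]
    apply ContDiffAt.mul _ (hn.inv hn0)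
    fin_cases a <;> simp only [vv, Matrix.cons_val_zero, Matrix.cons_val_one, Matrix.head_cons, Matrix.cons_val_two, Matrix.tail_cons, Fin.isValue] <;>
    repeat
      first
      | exact hr
      | exact hp 0
      | exact hp 1
      | exact hp 2
      | exact contDiffAt_const
      | apply ContDiffAt.pow
      | apply ContDiffAt.neg
      | apply ContDiffAt.add
      | apply ContDiffAt.sub
      | apply ContDiffAt.mul
  · refine contDiffOn_pi.2 fun a => fun k hk => ContDiffAt.contDiffWithinAt ?_
    have hk' : k ≠ 0 := by simpa using hk
    have hr : ContDiffAt ℝ (⊤ : ℕ∞) (fun k : Fin 3 → ℝ => ((rr k : ℝ):ℂ)) k :=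
      Complex.ofRealCLM.contDiff.contDiffAt.comp k (cdAt_rr hk')
    have hn : ContDiffAt ℝ (⊤ : ℕ∞) (fun k : Fin 3 → ℝ => ((nn k : ℝ):ℂ)) k :=
      Complex.ofRealCLM.contDiff.contDiffAt.comp k (cdAt_nn hk')
    have hp : ∀ i : Fin 3, ContDiffAt ℝ (⊤ : ℕ∞) (fun k : Fin 3 → ℝ => ((k i : ℝ):ℂ)) k :=
      fun i => (Complex.ofRealCLM.contDiff.comp (cd_proj i)).contDiffAt
    have hn0 : ((rr k:ℂ)*((nn k : ℝ):ℂ)) ≠ 0 := by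
      apply mul_ne_zero <;> exact_mod_cast (by first | exact (rr_pos hk').ne' | exact (nn_pos hk').ne')
    show ContDiffAt ℝ (⊤ : ℕ∞) (fun x => ww x a / ((rr x:ℂ)*((nn x : ℝ):ℂ))) k
    simp only [div_eq_mul_inv]
    apply ContDiffAt.mul _ ((hr.mul hn).inv hn0)
    fin_cases a <;> simp only [ww, Matrix.cons_val_zero, Matrix.cons_val_one, Matrix.head_cons, Matrix.cons_val_two, Matrix.tail_cons, Fin.isValue] <;>
    repeat
      first
      | exact hr
      | exact hp 0
      | exact hp 1
      | exact hp 2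
      | exact contDiffAt_const
      | apply ContDiffAt.pow
      | apply ContDiffAt.neg
      | apply ContDiffAt.add
      | apply ContDiffAt.sub
      | apply ContDiffAt.mul
  · intro k hk'
    have hs := sumsq_pos hk'
    have hrp := rr_pos hk'
    have hQ := Qp_pos hk'
    have hnp := nn_pos hk'
    have hN0 : ((nn k : ℝ):ℂ) ≠ 0 := by exact_mod_cast hnp.ne'
    have hR0 : ((rr k:ℂ)) ≠ 0 := by exact_mod_cast hrp.ne'
    have hRN0 : ((rr k:ℂ)*((nn k : ℝ):ℂ)) ≠ 0 := mul_ne_zero hR0 hN0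
    have hRc : (rr k:ℂ)^2 = (k 0:ℂ)^2 + (k 1:ℂ)^2 + (k 2:ℂ)^2 := by
      have := congrArg Complex.ofReal (rr_sq k)
      push_cast at this
      exact this
    have hNQ : ((nn k : ℝ):ℂ) * ((nn k : ℝ):ℂ) = ((Qp k : ℝ):ℂ) := by
      have h := Real.mul_self_sqrt hQ.le
      have := congrArg Complex.ofReal h
      push_cast at this
      exact this
    have hQC : ((nn k : ℝ):ℂ) * ((nn k : ℝ):ℂ) = (10 : ℂ)*(k 2:ℂ)^2*(rr k:ℂ)^2 + (4 : ℂ)*(k 2:ℂ)^3*(rr k:ℂ) + (2 : ℂ)*(k 2:ℂ)^4 + (k 1:ℂ)^2*(rr k:ℂ)^2 + (4 : ℂ)*(k 1:ℂ)^2*(k 2:ℂ)*(rr k:ℂ) + (3 : ℂ)*(k 1:ℂ)^2*(k 2:ℂ)^2 + (k 1:ℂ)^4 + (9 : ℂ)*(k 0:ℂ)^2*(rr k:ℂ)^2 + (4 : ℂ)*(k 0:ℂ)^2*(k 2:ℂ)*(rr k:ℂ) + (3 : ℂ)*(k 0:ℂ)^2*(k 2:ℂ)^2 + (2 : ℂ)*(k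 0:ℂ)^2*(k 1:ℂ)^2 + (k 0:ℂ)^4 := by
      rw [hNQ]
      simp only [Qp]
      push_cast
      ring
    refine ⟨?_, ?_, ?_, ?_, ?_, ?_⟩
    · simp only [Fin.sum_univ_three, vv, Matrix.cons_val_zero, Matrix.cons_val_one, Matrix.head_cons, Matrix.cons_val_two, Matrix.tail_cons, Fin.isValue]
      ring
    · simp only [Fin.sum_univ_three, ww, Matrix.cons_val_zero, Matrix.cons_val_one, Matrix.head_cons, Matrix.cons_val_two, Matrix.tail_cons, Fin.isValue]
      ring
    · simp only [Fin.sum_univ_three]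
      rw [show (1:ℂ) = (((nn k : ℝ):ℂ)*((nn k : ℝ):ℂ))/(((nn k : ℝ):ℂ)*((nn k : ℝ):ℂ)) from
        (div_self (mul_ne_zero hN0 hN0)).symm]
      simp only [vv, Matrix.cons_val_zero, Matrix.cons_val_one, Matrix.head_cons, Matrix.cons_val_two, Matrix.tail_cons, Fin.isValue, map_div₀, map_add, map_sub, map_mul, map_neg, map_pow, map_ofNat, Complex.conj_ofReal, Complex.conj_I, RingHomCompTriple.comp_apply]
      linear_combination (((-1 : ℂ)*(k 2:ℂ)^2 + (-1 : ℂ)*(k 2:ℂ)^2*Complex.I^2 + (-1 : ℂ)*(k 1:ℂ)^2 + (-1 : ℂ)*(k 1:ℂ)^2*Complex.I^2) * hRc + ((2 : ℂ)*(k 2:ℂ)^3*(rr k:ℂ) + (-2 : ℂ)*(k 2:ℂ)^4 + (2 : ℂ)*(k 1:ℂ)^2*(k 2:ℂ)*(rr k:ℂ) + (-3 : ℂ)*(k 1:ℂ)^2*(k 2:ℂ)^2 + (-1 : ℂ)*(k 1:ℂ)^4 + (2 : ℂ)*(k 0:ℂ)^2*(k 2:ℂ)*(rr k:ℂ) + (-3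 : ℂ)*(k 0:ℂ)^2*(k 2:ℂ)^2 + (-2 : ℂ)*(k 0:ℂ)^2*(k 1:ℂ)^2 + (-1 : ℂ)*(k 0:ℂ)^4) * Complex.I_sq - hQC) / (((nn k : ℝ):ℂ)*((nn k : ℝ):ℂ))
    · simp only [Fin.sum_univ_three]
      rw [show (1:ℂ) = (((rr k:ℂ)*((nn k : ℝ):ℂ))*((rr k:ℂ)*((nn k : ℝ):ℂ)))/(((rr k:ℂ)*((nn k : ℝ):ℂ))*((rr k:ℂ)*((nn k : ℝ):ℂ))) from
        (div_self (mul_ne_zero hRN0 hRN0)).symm]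
      simp only [ww, Matrix.cons_val_zero, Matrix.cons_val_one, Matrix.head_cons, Matrix.cons_val_two, Matrix.tail_cons, Fin.isValue, map_div₀, map_add, map_sub, map_mul, map_neg, map_pow, map_ofNat, Complex.conj_ofReal, Complex.conj_I, RingHomCompTriple.comp_apply]
      linear_combination (((-10 : ℂ)*(k 2:ℂ)^2*(rr k:ℂ)^2 + (-4 : ℂ)*(k 2:ℂ)^3*(rr k:ℂ) + (-3 : ℂ)*(k 2:ℂ)^4 + (-1 : ℂ)*(k 2:ℂ)^4*Complex.I^2 + (-1 : ℂ)*(k 1:ℂ)^2*(rr k:ℂ)^2 + (-4 : ℂ)*(k 1:ℂ)^2*(k 2:ℂ)*(rr k:ℂ) + (-5 : ℂ)*(k 1:ℂ)^2*(k 2:ℂ)^2 + (-2 : ℂ)*(k 1:ℂ)^2*(k 2:ℂ)^2*Complex.I^2 + (-2 : ℂ)*(k 1:ℂ)^4 + (-1 : ℂ)*(k 1:ℂ)^4*Complex.I^2 + (-9 : ℂ)*(k 0:ℂ)^2*(rr k:ℂ)^2 + (-4 : ℂ)*(k 0:ℂ)^2*(k 2:ℂ)*(rr k:ℂ) + (-4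 : ℂ)*(k 0:ℂ)^2*(k 2:ℂ)^2 + (-1 : ℂ)*(k 0:ℂ)^2*(k 2:ℂ)^2*Complex.I^2 + (-3 : ℂ)*(k 0:ℂ)^2*(k 1:ℂ)^2 + (-1 : ℂ)*(k 0:ℂ)^2*(k 1:ℂ)^2*Complex.I^2 + (-1 : ℂ)*(k 0:ℂ)^4) * hRc + ((2 : ℂ)*(k 2:ℂ)^5*(rr k:ℂ) + (-2 : ℂ)*(k 2:ℂ)^6 + (4 : ℂ)*(k 1:ℂ)^2*(k 2:ℂ)^3*(rr k:ℂ) + (-5 : ℂ)*(k 1:ℂ)^2*(k 2:ℂ)^4 + (2 : ℂ)*(k 1:ℂ)^4*(k 2:ℂ)*(rr k:ℂ) + (-4 : ℂ)*(k 1:ℂ)^4*(k 2:ℂ)^2 + (-1 : ℂ)*(k 1:ℂ)^6 + (4 : ℂ)*(k 0:ℂ)^2*(k 2:ℂ)^3*(rr k:ℂ) + (-5 : ℂ)*(k 0:ℂ)^2*(k 2:ℂ)^4 + (4 : ℂ)*(k 0:ℂ)^2*(k 1:ℂ)^2*(k 2:ℂ)*(rr k:ℂ) + (-8 : ℂ)*(k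 0:ℂ)^2*(k 1:ℂ)^2*(k 2:ℂ)^2 + (-3 : ℂ)*(k 0:ℂ)^2*(k 1:ℂ)^4 + (2 : ℂ)*(k 0:ℂ)^4*(k 2:ℂ)*(rr k:ℂ) + (-4 : ℂ)*(k 0:ℂ)^4*(k 2:ℂ)^2 + (-3 : ℂ)*(k 0:ℂ)^4*(k 1:ℂ)^2 + (-1 : ℂ)*(k 0:ℂ)^6) * Complex.I_sq + (-(rr k:ℂ)^2) * hQC) / (((rr k:ℂ)*((nn k : ℝ):ℂ))*((rr k:ℂ)*((nn k : ℝ):ℂ)))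
    · simp only [Fin.sum_univ_three, vv, ww, Matrix.cons_val_zero, Matrix.cons_val_one, Matrix.head_cons, Matrix.cons_val_two, Matrix.tail_cons, Fin.isValue, map_div₀, map_add, map_sub, map_mul, map_neg, map_pow, map_ofNat, Complex.conj_ofReal, Complex.conj_I, RingHomCompTriple.comp_apply]
      ring
    · intro E hKE
      rw [Fin.sum_univ_three] at hKE
      refine ⟨((-((k 1:ℂ)^2+(k 2:ℂ)^2+3*(k 2:ℂ)*(rr k:ℂ)) + (k 0:ℂ)*(k 1:ℂ)*Complex.I)*E 0 + ((k 0:ℂ)*(k 1:ℂ) - ((k 0:ℂ)^2+(k 2:ℂ)^2-(k 2:ℂ)*(rr k:ℂ))*Complex.I)*E 1 + (3*(k 0:ℂ)*(rr k:ℂ)+(k 0:ℂ)*(k 2:ℂ) - (k 1:ℂ)*((rr k:ℂ)-(k 2:ℂ))*Complex.I)*E 2)/((nn k : ℝ):ℂ), ((3*(k 0:ℂ)*(k 1:ℂ)*(rr k:ℂ) - ((k 0:ℂ)^2*(k 2:ℂ)+(k 2:ℂ)^3-(k 2:ℂ)^2*(rr k:ℂ)-(k 1:ℂ)^2*(rr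 k:ℂ)+(k 1:ℂ)^2*(k 2:ℂ))*Complex.I)*E 0 + (-((k 1:ℂ)^2*(k 2:ℂ)+(k 2:ℂ)^3+3*(k 2:ℂ)^2*(rr k:ℂ)+3*(k 0:ℂ)^2*(rr k:ℂ)+(k 0:ℂ)^2*(k 2:ℂ)) - (k 0:ℂ)*(k 1:ℂ)*(rr k:ℂ)*Complex.I)*E 1 + ((k 0:ℂ)^2*(k 1:ℂ)+(k 1:ℂ)^3+(k 1:ℂ)*(k 2:ℂ)^2+3*(k 1:ℂ)*(k 2:ℂ)*(rr k:ℂ) - (-(k 0:ℂ)^3-(k 0:ℂ)*(k 2:ℂ)^2+(k 0:ℂ)*(k 2:ℂ)*(rr k:ℂ)-(k 0:ℂ)*(k 1:ℂ)^2)*Complex.I)*E 2)/((rr k:ℂ)*((nn k : ℝ):ℂ)), ?_⟩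
      have key6_0 : (rr k:ℂ)^2*((-((k 1:ℂ)^2+(k 2:ℂ)^2+3*(k 2:ℂ)*(rr k:ℂ)) + (k 0:ℂ)*(k 1:ℂ)*Complex.I)*E 0 + ((k 0:ℂ)*(k 1:ℂ) - ((k 0:ℂ)^2+(k 2:ℂ)^2-(k 2:ℂ)*(rr k:ℂ))*Complex.I)*E 1 + (3*(k 0:ℂ)*(rr k:ℂ)+(k 0:ℂ)*(k 2:ℂ) - (k 1:ℂ)*((rr k:ℂ)-(k 2:ℂ))*Complex.I)*E 2)*(-((k 1:ℂ)^2+(k 2:ℂ)^2+3*(k 2:ℂ)*(rr k:ℂ)) - (k 0:ℂ)*(k 1:ℂ)*Complex.I) + ((3*(k 0:ℂ)*(k 1:ℂ)*(rr k:ℂ) - ((k 0:ℂ)^2*(k 2:ℂ)+(k 2:ℂ)^3-(k 2:ℂ)^2*(rr k:ℂ)-(k 1:ℂ)^2*(rr k:ℂ)+(k 1:ℂ)^2*(k 2:ℂ))*Complex.I)*E 0 + (-((k 1:ℂ)^2*(k 2:ℂ)+(k 2:ℂ)^3+3*(k 2:ℂ)^2*(rr k:ℂ)+3*(k 0:ℂ)^2*(rr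 k:ℂ)+(k 0:ℂ)^2*(k 2:ℂ)) - (k 0:ℂ)*(k 1:ℂ)*(rr k:ℂ)*Complex.I)*E 1 + ((k 0:ℂ)^2*(k 1:ℂ)+(k 1:ℂ)^3+(k 1:ℂ)*(k 2:ℂ)^2+3*(k 1:ℂ)*(k 2:ℂ)*(rr k:ℂ) - (-(k 0:ℂ)^3-(k 0:ℂ)*(k 2:ℂ)^2+(k 0:ℂ)*(k 2:ℂ)*(rr k:ℂ)-(k 0:ℂ)*(k 1:ℂ)^2)*Complex.I)*E 2)*(3*(k 0:ℂ)*(k 1:ℂ)*(rr k:ℂ) + ((k 0:ℂ)^2*(k 2:ℂ)+(k 2:ℂ)^3-(k 2:ℂ)^2*(rr k:ℂ)-(k 1:ℂ)^2*(rr k:ℂ)+(k 1:ℂ)^2*(k 2:ℂ))*Complex.I)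
          = ((nn k : ℝ):ℂ)*((nn k : ℝ):ℂ)*((rr k:ℂ)^2*E 0) := by
        linear_combination ((-10 : ℂ)*(k 0:ℂ)*(k 2:ℂ)^2*(rr k:ℂ)^2 + (-4 : ℂ)*(k 0:ℂ)*(k 2:ℂ)^3*(rr k:ℂ) + (-2 : ℂ)*(k 0:ℂ)*(k 2:ℂ)^4 + (-1 : ℂ)*(k 0:ℂ)*(k 1:ℂ)^2*(rr k:ℂ)^2 + (-4 : ℂ)*(k 0:ℂ)*(k 1:ℂ)^2*(k 2:ℂ)*(rr k:ℂ) + (-3 : ℂ)*(k 0:ℂ)*(k 1:ℂ)^2*(k 2:ℂ)^2 + (-1 : ℂ)*(k 0:ℂ)*(k 1:ℂ)^4 + (-9 : ℂ)*(k 0:ℂ)^3*(rr k:ℂ)^2 + (-4 : ℂ)*(k 0:ℂ)^3*(k 2:ℂ)*(rr k:ℂ) + (-3 : ℂ)*(k 0:ℂ)^3*(k 2:ℂ)^2 + (-2 : ℂ)*(k 0:ℂ)^3*(k 1:ℂ)^2 + (-1 : ℂ)*(k 0:ℂ)^5) * hKE + ((-1 : ℂ)*(k 2:ℂ)^2*(rr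 k:ℂ)^2*E 0 + (-3 : ℂ)*(k 2:ℂ)^2*(rr k:ℂ)^2*Complex.I*E 1 + (2 : ℂ)*(k 2:ℂ)^3*(rr k:ℂ)*E 0 + (2 : ℂ)*(k 2:ℂ)^3*(rr k:ℂ)*Complex.I*E 1 + (-2 : ℂ)*(k 2:ℂ)^4*E 0 + (k 2:ℂ)^4*Complex.I*E 1 + (-1 : ℂ)*(k 2:ℂ)^4*Complex.I^2*E 0 + (3 : ℂ)*(k 1:ℂ)*(k 2:ℂ)*(rr k:ℂ)^2*Complex.I*E 2 + (-2 : ℂ)*(k 1:ℂ)*(k 2:ℂ)^2*(rr k:ℂ)*Complex.I*E 2 + (-1 : ℂ)*(k 1:ℂ)*(k 2:ℂ)^3*Complex.I*E 2 + (-1 : ℂ)*(k 1:ℂ)^2*(rr k:ℂ)^2*E 0 + (2 : ℂ)*(k 1:ℂ)^2*(k 2:ℂ)*(rr k:ℂ)*E 0 + (-1 : ℂ)*(k 1:ℂ)^2*(k 2:ℂ)*(rr k:ℂ)*Complex.I*E 1 + (-3 : ℂ)*(k 1:ℂ)^2*(k 2:ℂ)^2*E 0 + (k 1:ℂ)^2*(k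 2:ℂ)^2*Complex.I*E 1 + (-2 : ℂ)*(k 1:ℂ)^2*(k 2:ℂ)^2*Complex.I^2*E 0 + (k 1:ℂ)^3*(rr k:ℂ)*Complex.I*E 2 + (-1 : ℂ)*(k 1:ℂ)^3*(k 2:ℂ)*Complex.I*E 2 + (-1 : ℂ)*(k 1:ℂ)^4*E 0 + (-1 : ℂ)*(k 1:ℂ)^4*Complex.I^2*E 0 + (-9 : ℂ)*(k 0:ℂ)*(k 2:ℂ)*(rr k:ℂ)^2*E 2 + (-6 : ℂ)*(k 0:ℂ)*(k 2:ℂ)^2*(rr k:ℂ)*E 2 + (k 0:ℂ)*(k 2:ℂ)^3*Complex.I^2*E 2 + (-3 : ℂ)*(k 0:ℂ)*(k 1:ℂ)*(k 2:ℂ)*(rr k:ℂ)*E 1 + (-1 : ℂ)*(k 0:ℂ)*(k 1:ℂ)*(k 2:ℂ)*(rr k:ℂ)*Complex.I^2*E 1 + (2 : ℂ)*(k 0:ℂ)*(k 1:ℂ)*(k 2:ℂ)^2*Complex.I^2*E 1 + (-3 : ℂ)*(k 0:ℂ)*(k 1:ℂ)^2*(rr k:ℂ)*E 2 + (k 0:ℂ)*(k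 1:ℂ)^2*(rr k:ℂ)*Complex.I^2*E 2 + (k 0:ℂ)*(k 1:ℂ)^3*Complex.I^2*E 1 + (-9 : ℂ)*(k 0:ℂ)^2*(rr k:ℂ)^2*E 0 + (-4 : ℂ)*(k 0:ℂ)^2*(k 2:ℂ)*(rr k:ℂ)*E 0 + (3 : ℂ)*(k 0:ℂ)^2*(k 2:ℂ)*(rr k:ℂ)*Complex.I*E 1 + (-3 : ℂ)*(k 0:ℂ)^2*(k 2:ℂ)^2*E 0 + (k 0:ℂ)^2*(k 2:ℂ)^2*Complex.I*E 1 + (-3 : ℂ)*(k 0:ℂ)^2*(k 1:ℂ)*(rr k:ℂ)*Complex.I*E 2 + (-1 : ℂ)*(k 0:ℂ)^2*(k 1:ℂ)*(k 2:ℂ)*Complex.I*E 2 + (-2 : ℂ)*(k 0:ℂ)^2*(k 1:ℂ)^2*E 0 + (-1 : ℂ)*(k 0:ℂ)^2*(k 1:ℂ)^2*Complex.I^2*E 0 + (k 0:ℂ)^3*(k 1:ℂ)*Complex.I^2*E 1 + (-1 : ℂ)*(k 0:ℂ)^4*E 0) * hRc + ((2 : ℂ)*(k 2:ℂ)^5*(rr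 k:ℂ)*E 0 + (-2 : ℂ)*(k 2:ℂ)^6*E 0 + (4 : ℂ)*(k 1:ℂ)^2*(k 2:ℂ)^3*(rr k:ℂ)*E 0 + (-5 : ℂ)*(k 1:ℂ)^2*(k 2:ℂ)^4*E 0 + (2 : ℂ)*(k 1:ℂ)^4*(k 2:ℂ)*(rr k:ℂ)*E 0 + (-4 : ℂ)*(k 1:ℂ)^4*(k 2:ℂ)^2*E 0 + (-1 : ℂ)*(k 1:ℂ)^6*E 0 + (-2 : ℂ)*(k 0:ℂ)*(k 2:ℂ)^4*(rr k:ℂ)*E 2 + (2 : ℂ)*(k 0:ℂ)*(k 2:ℂ)^5*E 2 + (-2 : ℂ)*(k 0:ℂ)*(k 1:ℂ)*(k 2:ℂ)^3*(rr k:ℂ)*E 1 + (2 : ℂ)*(k 0:ℂ)*(k 1:ℂ)*(k 2:ℂ)^4*E 1 + (-2 : ℂ)*(k 0:ℂ)*(k 1:ℂ)^2*(k 2:ℂ)^2*(rr k:ℂ)*E 2 + (3 : ℂ)*(k 0:ℂ)*(k 1:ℂ)^2*(k 2:ℂ)^3*E 2 + (-2 : ℂ)*(k 0:ℂ)*(k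 1:ℂ)^3*(k 2:ℂ)*(rr k:ℂ)*E 1 + (3 : ℂ)*(k 0:ℂ)*(k 1:ℂ)^3*(k 2:ℂ)^2*E 1 + (k 0:ℂ)*(k 1:ℂ)^4*(k 2:ℂ)*E 2 + (k 0:ℂ)*(k 1:ℂ)^5*E 1 + (2 : ℂ)*(k 0:ℂ)^2*(k 2:ℂ)^3*(rr k:ℂ)*E 0 + (-3 : ℂ)*(k 0:ℂ)^2*(k 2:ℂ)^4*E 0 + (2 : ℂ)*(k 0:ℂ)^2*(k 1:ℂ)^2*(k 2:ℂ)*(rr k:ℂ)*E 0 + (-5 : ℂ)*(k 0:ℂ)^2*(k 1:ℂ)^2*(k 2:ℂ)^2*E 0 + (-2 : ℂ)*(k 0:ℂ)^2*(k 1:ℂ)^4*E 0 + (-2 : ℂ)*(k 0:ℂ)^3*(k 2:ℂ)^2*(rr k:ℂ)*E 2 + (3 : ℂ)*(k 0:ℂ)^3*(k 2:ℂ)^3*E 2 + (-2 : ℂ)*(k 0:ℂ)^3*(k 1:ℂ)*(k 2:ℂ)*(rr k:ℂ)*E 1 + (3 : ℂ)*(k 0:ℂ)^3*(k 1:ℂ)*(k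 2:ℂ)^2*E 1 + (2 : ℂ)*(k 0:ℂ)^3*(k 1:ℂ)^2*(k 2:ℂ)*E 2 + (2 : ℂ)*(k 0:ℂ)^3*(k 1:ℂ)^3*E 1 + (-1 : ℂ)*(k 0:ℂ)^4*(k 2:ℂ)^2*E 0 + (-1 : ℂ)*(k 0:ℂ)^4*(k 1:ℂ)^2*E 0 + (k 0:ℂ)^5*(k 2:ℂ)*E 2 + (k 0:ℂ)^5*(k 1:ℂ)*E 1) * Complex.I_sq + (-((rr k:ℂ)^2*E 0))*hQC
      have h0 : E 0 = ((-((k 1:ℂ)^2+(k 2:ℂ)^2+3*(k 2:ℂ)*(rr k:ℂ)) + (k 0:ℂ)*(k 1:ℂ)*Complex.I)*E 0 + ((k 0:ℂ)*(k 1:ℂ) - ((k 0:ℂ)^2+(k 2:ℂ)^2-(k 2:ℂ)*(rr k:ℂ))*Complex.I)*E 1 + (3*(k 0:ℂ)*(rr k:ℂ)+(k 0:ℂ)*(k 2:ℂ) - (k 1:ℂ)*((rr k:ℂ)-(k 2:ℂ))*Complex.I)*E 2)/((nn k : ℝ):ℂ) * (vv k 0 / ((nn k : ℝ):ℂ))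
          + ((3*(k 0:ℂ)*(k 1:ℂ)*(rr k:ℂ) - ((k 0:ℂ)^2*(k 2:ℂ)+(k 2:ℂ)^3-(k 2:ℂ)^2*(rr k:ℂ)-(k 1:ℂ)^2*(rr k:ℂ)+(k 1:ℂ)^2*(k 2:ℂ))*Complex.I)*E 0 + (-((k 1:ℂ)^2*(k 2:ℂ)+(k 2:ℂ)^3+3*(k 2:ℂ)^2*(rr k:ℂ)+3*(k 0:ℂ)^2*(rr k:ℂ)+(k 0:ℂ)^2*(k 2:ℂ)) - (k 0:ℂ)*(k 1:ℂ)*(rr k:ℂ)*Complex.I)*E 1 + ((k 0:ℂ)^2*(k 1:ℂ)+(k 1:ℂ)^3+(k 1:ℂ)*(k 2:ℂ)^2+3*(k 1:ℂ)*(k 2:ℂ)*(rr k:ℂ) - (-(k 0:ℂ)^3-(k 0:ℂ)*(k 2:ℂ)^2+(k 0:ℂ)*(k 2:ℂ)*(rr k:ℂ)-(k 0:ℂ)*(k 1:ℂ)^2)*Complex.I)*E 2)/((rr k:ℂ)*((nn k : ℝ):ℂ)) * (ww k 0 / ((rr k:ℂ)*((nn k : ℝ):ℂ))) := by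
        rw [div_mul_div_comm, div_mul_div_comm,
          div_add_div _ _ (mul_ne_zero hN0 hN0) (mul_ne_zero hRN0 hRN0), eq_div_iff
            (mul_ne_zero (mul_ne_zero hN0 hN0) (mul_ne_zero hRN0 hRN0))]
        simp only [vv, ww, Matrix.cons_val_zero, Matrix.cons_val_one, Matrix.head_cons, Matrix.cons_val_two, Matrix.tail_cons, Fin.isValue]
        linear_combination (-(((nn k : ℝ):ℂ)*((nn k : ℝ):ℂ))) * key6_0
      have key6_1 : (rr k:ℂ)^2*((-((k 1:ℂ)^2+(k 2:ℂ)^2+3*(k 2:ℂ)*(rr k:ℂ)) + (k 0:ℂ)*(k 1:ℂ)*Complex.I)*E 0 + ((k 0:ℂ)*(k 1:ℂ) - ((k 0:ℂ)^2+(k 2:ℂ)^2-(k 2:ℂ)*(rr k:ℂ))*Complex.I)*E 1 + (3*(k 0:ℂ)*(rr k:ℂ)+(k 0:ℂ)*(k 2:ℂ) - (k 1:ℂ)*((rr k:ℂ)-(k 2:ℂ))*Complex.I)*E 2)*((k 0:ℂ)*(k 1:ℂ) + ((k 0:ℂ)^2+(k 2:ℂ)^2-(k 2:ℂ)*(rr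 k:ℂ))*Complex.I) + ((3*(k 0:ℂ)*(k 1:ℂ)*(rr k:ℂ) - ((k 0:ℂ)^2*(k 2:ℂ)+(k 2:ℂ)^3-(k 2:ℂ)^2*(rr k:ℂ)-(k 1:ℂ)^2*(rr k:ℂ)+(k 1:ℂ)^2*(k 2:ℂ))*Complex.I)*E 0 + (-((k 1:ℂ)^2*(k 2:ℂ)+(k 2:ℂ)^3+3*(k 2:ℂ)^2*(rr k:ℂ)+3*(k 0:ℂ)^2*(rr k:ℂ)+(k 0:ℂ)^2*(k 2:ℂ)) - (k 0:ℂ)*(k 1:ℂ)*(rr k:ℂ)*Complex.I)*E 1 + ((k 0:ℂ)^2*(k 1:ℂ)+(k 1:ℂ)^3+(k 1:ℂ)*(k 2:ℂ)^2+3*(k 1:ℂ)*(k 2:ℂ)*(rr k:ℂ) - (-(k 0:ℂ)^3-(k 0:ℂ)*(k 2:ℂ)^2+(k 0:ℂ)*(k 2:ℂ)*(rr k:ℂ)-(k 0:ℂ)*(k 1:ℂ)^2)*Complex.I)*E 2)*(-((k 1:ℂ)^2*(k 2:ℂ)+(k 2:ℂ)^3+3*(k 2:ℂ)^2*(rr k:ℂ)+3*(k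 0:ℂ)^2*(rr k:ℂ)+(k 0:ℂ)^2*(k 2:ℂ)) + (k 0:ℂ)*(k 1:ℂ)*(rr k:ℂ)*Complex.I)
          = ((nn k : ℝ):ℂ)*((nn k : ℝ):ℂ)*((rr k:ℂ)^2*E 1) := by
        linear_combination ((-10 : ℂ)*(k 1:ℂ)*(k 2:ℂ)^2*(rr k:ℂ)^2 + (-4 : ℂ)*(k 1:ℂ)*(k 2:ℂ)^3*(rr k:ℂ) + (-2 : ℂ)*(k 1:ℂ)*(k 2:ℂ)^4 + (-1 : ℂ)*(k 1:ℂ)^3*(rr k:ℂ)^2 + (-4 : ℂ)*(k 1:ℂ)^3*(k 2:ℂ)*(rr k:ℂ) + (-3 : ℂ)*(k 1:ℂ)^3*(k 2:ℂ)^2 + (-1 : ℂ)*(k 1:ℂ)^5 + (-9 : ℂ)*(k 0:ℂ)^2*(k 1:ℂ)*(rr k:ℂ)^2 + (-4 : ℂ)*(k 0:ℂ)^2*(k 1:ℂ)*(k 2:ℂ)*(rr k:ℂ) + (-3 : ℂ)*(k 0:ℂ)^2*(k 1:ℂ)*(k 2:ℂ)^2 + (-2 : ℂ)*(k 0:ℂ)^2*(k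 1:ℂ)^3 + (-1 : ℂ)*(k 0:ℂ)^4*(k 1:ℂ)) * hKE + ((-10 : ℂ)*(k 2:ℂ)^2*(rr k:ℂ)^2*E 1 + (3 : ℂ)*(k 2:ℂ)^2*(rr k:ℂ)^2*Complex.I*E 0 + (-1 : ℂ)*(k 2:ℂ)^2*(rr k:ℂ)^2*Complex.I^2*E 1 + (-4 : ℂ)*(k 2:ℂ)^3*(rr k:ℂ)*E 1 + (-2 : ℂ)*(k 2:ℂ)^3*(rr k:ℂ)*Complex.I*E 0 + (2 : ℂ)*(k 2:ℂ)^3*(rr k:ℂ)*Complex.I^2*E 1 + (-3 : ℂ)*(k 2:ℂ)^4*E 1 + (-1 : ℂ)*(k 2:ℂ)^4*Complex.I*E 0 + (-2 : ℂ)*(k 2:ℂ)^4*Complex.I^2*E 1 + (k 1:ℂ)*(k 2:ℂ)*(rr k:ℂ)^2*Complex.I^2*E 2 + (-2 : ℂ)*(k 1:ℂ)*(k 2:ℂ)^2*(rr k:ℂ)*Complex.I^2*E 2 + (k 1:ℂ)*(k 2:ℂ)^3*E 2 + (2 : ℂ)*(k 1:ℂ)*(k 2:ℂ)^3*Complex.I^2*E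 2 + (-1 : ℂ)*(k 1:ℂ)^2*(rr k:ℂ)^2*E 1 + (-4 : ℂ)*(k 1:ℂ)^2*(k 2:ℂ)*(rr k:ℂ)*E 1 + (k 1:ℂ)^2*(k 2:ℂ)*(rr k:ℂ)*Complex.I*E 0 + (-4 : ℂ)*(k 1:ℂ)^2*(k 2:ℂ)^2*E 1 + (-1 : ℂ)*(k 1:ℂ)^2*(k 2:ℂ)^2*Complex.I*E 0 + (-1 : ℂ)*(k 1:ℂ)^2*(k 2:ℂ)^2*Complex.I^2*E 1 + (k 1:ℂ)^3*(k 2:ℂ)*E 2 + (k 1:ℂ)^3*(k 2:ℂ)*Complex.I^2*E 2 + (-1 : ℂ)*(k 1:ℂ)^4*E 1 + (-3 : ℂ)*(k 0:ℂ)*(k 2:ℂ)*(rr k:ℂ)^2*Complex.I*E 2 + (2 : ℂ)*(k 0:ℂ)*(k 2:ℂ)^2*(rr k:ℂ)*Complex.I*E 2 + (k 0:ℂ)*(k 2:ℂ)^3*Complex.I*E 2 + (-3 : ℂ)*(k 0:ℂ)*(k 1:ℂ)*(k 2:ℂ)*(rr k:ℂ)*E 0 + (-1 : ℂ)*(k 0:ℂ)*(k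 1:ℂ)*(k 2:ℂ)*(rr k:ℂ)*Complex.I^2*E 0 + (2 : ℂ)*(k 0:ℂ)*(k 1:ℂ)*(k 2:ℂ)^2*Complex.I^2*E 0 + (-1 : ℂ)*(k 0:ℂ)*(k 1:ℂ)^2*(rr k:ℂ)*Complex.I*E 2 + (k 0:ℂ)*(k 1:ℂ)^2*(k 2:ℂ)*Complex.I*E 2 + (k 0:ℂ)*(k 1:ℂ)^3*Complex.I^2*E 0 + (-9 : ℂ)*(k 0:ℂ)^2*(rr k:ℂ)^2*E 1 + (-4 : ℂ)*(k 0:ℂ)^2*(k 2:ℂ)*(rr k:ℂ)*E 1 + (-3 : ℂ)*(k 0:ℂ)^2*(k 2:ℂ)*(rr k:ℂ)*Complex.I*E 0 + (2 : ℂ)*(k 0:ℂ)^2*(k 2:ℂ)*(rr k:ℂ)*Complex.I^2*E 1 + (-4 : ℂ)*(k 0:ℂ)^2*(k 2:ℂ)^2*E 1 + (-1 : ℂ)*(k 0:ℂ)^2*(k 2:ℂ)^2*Complex.I*E 0 + (-3 : ℂ)*(k 0:ℂ)^2*(k 2:ℂ)^2*Complex.I^2*E 1 + (3 : ℂ)*(k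 0:ℂ)^2*(k 1:ℂ)*(rr k:ℂ)*E 2 + (-1 : ℂ)*(k 0:ℂ)^2*(k 1:ℂ)*(rr k:ℂ)*Complex.I^2*E 2 + (k 0:ℂ)^2*(k 1:ℂ)*(k 2:ℂ)*E 2 + (k 0:ℂ)^2*(k 1:ℂ)*(k 2:ℂ)*Complex.I^2*E 2 + (-2 : ℂ)*(k 0:ℂ)^2*(k 1:ℂ)^2*E 1 + (-1 : ℂ)*(k 0:ℂ)^2*(k 1:ℂ)^2*Complex.I^2*E 1 + (3 : ℂ)*(k 0:ℂ)^3*(rr k:ℂ)*Complex.I*E 2 + (k 0:ℂ)^3*(k 2:ℂ)*Complex.I*E 2 + (k 0:ℂ)^3*(k 1:ℂ)*Complex.I^2*E 0 + (-1 : ℂ)*(k 0:ℂ)^4*E 1 + (-1 : ℂ)*(k 0:ℂ)^4*Complex.I^2*E 1) * hRc + ((2 : ℂ)*(k 2:ℂ)^5*(rr k:ℂ)*E 1 + (-2 : ℂ)*(k 2:ℂ)^6*E 1 + (-2 : ℂ)*(k 1:ℂ)*(k 2:ℂ)^4*(rr k:ℂ)*E 2 + (2 : ℂ)*(k 1:ℂ)*(k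 2:ℂ)^5*E 2 + (2 : ℂ)*(k 1:ℂ)^2*(k 2:ℂ)^3*(rr k:ℂ)*E 1 + (-3 : ℂ)*(k 1:ℂ)^2*(k 2:ℂ)^4*E 1 + (-2 : ℂ)*(k 1:ℂ)^3*(k 2:ℂ)^2*(rr k:ℂ)*E 2 + (3 : ℂ)*(k 1:ℂ)^3*(k 2:ℂ)^3*E 2 + (-1 : ℂ)*(k 1:ℂ)^4*(k 2:ℂ)^2*E 1 + (k 1:ℂ)^5*(k 2:ℂ)*E 2 + (-2 : ℂ)*(k 0:ℂ)*(k 1:ℂ)*(k 2:ℂ)^3*(rr k:ℂ)*E 0 + (2 : ℂ)*(k 0:ℂ)*(k 1:ℂ)*(k 2:ℂ)^4*E 0 + (-2 : ℂ)*(k 0:ℂ)*(k 1:ℂ)^3*(k 2:ℂ)*(rr k:ℂ)*E 0 + (3 : ℂ)*(k 0:ℂ)*(k 1:ℂ)^3*(k 2:ℂ)^2*E 0 + (k 0:ℂ)*(k 1:ℂ)^5*E 0 + (4 : ℂ)*(k 0:ℂ)^2*(k 2:ℂ)^3*(rr k:ℂ)*E 1 + (-5 : ℂ)*(k 0:ℂ)^2*(k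 2:ℂ)^4*E 1 + (-2 : ℂ)*(k 0:ℂ)^2*(k 1:ℂ)*(k 2:ℂ)^2*(rr k:ℂ)*E 2 + (3 : ℂ)*(k 0:ℂ)^2*(k 1:ℂ)*(k 2:ℂ)^3*E 2 + (2 : ℂ)*(k 0:ℂ)^2*(k 1:ℂ)^2*(k 2:ℂ)*(rr k:ℂ)*E 1 + (-5 : ℂ)*(k 0:ℂ)^2*(k 1:ℂ)^2*(k 2:ℂ)^2*E 1 + (2 : ℂ)*(k 0:ℂ)^2*(k 1:ℂ)^3*(k 2:ℂ)*E 2 + (-1 : ℂ)*(k 0:ℂ)^2*(k 1:ℂ)^4*E 1 + (-2 : ℂ)*(k 0:ℂ)^3*(k 1:ℂ)*(k 2:ℂ)*(rr k:ℂ)*E 0 + (3 : ℂ)*(k 0:ℂ)^3*(k 1:ℂ)*(k 2:ℂ)^2*E 0 + (2 : ℂ)*(k 0:ℂ)^3*(k 1:ℂ)^3*E 0 + (2 : ℂ)*(k 0:ℂ)^4*(k 2:ℂ)*(rr k:ℂ)*E 1 + (-4 : ℂ)*(k 0:ℂ)^4*(k 2:ℂ)^2*E 1 + (k 0:ℂ)^4*(k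 1:ℂ)*(k 2:ℂ)*E 2 + (-2 : ℂ)*(k 0:ℂ)^4*(k 1:ℂ)^2*E 1 + (k 0:ℂ)^5*(k 1:ℂ)*E 0 + (-1 : ℂ)*(k 0:ℂ)^6*E 1) * Complex.I_sq + (-((rr k:ℂ)^2*E 1))*hQC
      have h1 : E 1 = ((-((k 1:ℂ)^2+(k 2:ℂ)^2+3*(k 2:ℂ)*(rr k:ℂ)) + (k 0:ℂ)*(k 1:ℂ)*Complex.I)*E 0 + ((k 0:ℂ)*(k 1:ℂ) - ((k 0:ℂ)^2+(k 2:ℂ)^2-(k 2:ℂ)*(rr k:ℂ))*Complex.I)*E 1 + (3*(k 0:ℂ)*(rr k:ℂ)+(k 0:ℂ)*(k 2:ℂ) - (k 1:ℂ)*((rr k:ℂ)-(k 2:ℂ))*Complex.I)*E 2)/((nn k : ℝ):ℂ) * (vv k 1 / ((nn k : ℝ):ℂ))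
          + ((3*(k 0:ℂ)*(k 1:ℂ)*(rr k:ℂ) - ((k 0:ℂ)^2*(k 2:ℂ)+(k 2:ℂ)^3-(k 2:ℂ)^2*(rr k:ℂ)-(k 1:ℂ)^2*(rr k:ℂ)+(k 1:ℂ)^2*(k 2:ℂ))*Complex.I)*E 0 + (-((k 1:ℂ)^2*(k 2:ℂ)+(k 2:ℂ)^3+3*(k 2:ℂ)^2*(rr k:ℂ)+3*(k 0:ℂ)^2*(rr k:ℂ)+(k 0:ℂ)^2*(k 2:ℂ)) - (k 0:ℂ)*(k 1:ℂ)*(rr k:ℂ)*Complex.I)*E 1 + ((k 0:ℂ)^2*(k 1:ℂ)+(k 1:ℂ)^3+(k 1:ℂ)*(k 2:ℂ)^2+3*(k 1:ℂ)*(k 2:ℂ)*(rr k:ℂ) - (-(k 0:ℂ)^3-(k 0:ℂ)*(k 2:ℂ)^2+(k 0:ℂ)*(k 2:ℂ)*(rr k:ℂ)-(k 0:ℂ)*(k 1:ℂ)^2)*Complex.I)*E 2)/((rr k:ℂ)*((nn k : ℝ):ℂ)) * (ww k 1 / ((rr k:ℂ)*((nn k : ℝ):ℂ))) := by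
        rw [div_mul_div_comm, div_mul_div_comm,
          div_add_div _ _ (mul_ne_zero hN0 hN0) (mul_ne_zero hRN0 hRN0), eq_div_iff
            (mul_ne_zero (mul_ne_zero hN0 hN0) (mul_ne_zero hRN0 hRN0))]
        simp only [vv, ww, Matrix.cons_val_zero, Matrix.cons_val_one, Matrix.head_cons, Matrix.cons_val_two, Matrix.tail_cons, Fin.isValue]
        linear_combination (-(((nn k : ℝ):ℂ)*((nn k : ℝ):ℂ))) * key6_1
      have key6_2 : (rr k:ℂ)^2*((-((k 1:ℂ)^2+(k 2:ℂ)^2+3*(k 2:ℂ)*(rr k:ℂ)) + (k 0:ℂ)*(k 1:ℂ)*Complex.I)*E 0 + ((k 0:ℂ)*(k 1:ℂ) - ((k 0:ℂ)^2+(k 2:ℂ)^2-(k 2:ℂ)*(rr k:ℂ))*Complex.I)*E 1 + (3*(k 0:ℂ)*(rr k:ℂ)+(k 0:ℂ)*(k 2:ℂ) - (k 1:ℂ)*((rr k:ℂ)-(k 2:ℂ))*Complex.I)*E 2)*(3*(k 0:ℂ)*(rr k:ℂ)+(k 0:ℂ)*(k 2:ℂ) + (k 1:ℂ)*((rr k:ℂ)-(k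 2:ℂ))*Complex.I) + ((3*(k 0:ℂ)*(k 1:ℂ)*(rr k:ℂ) - ((k 0:ℂ)^2*(k 2:ℂ)+(k 2:ℂ)^3-(k 2:ℂ)^2*(rr k:ℂ)-(k 1:ℂ)^2*(rr k:ℂ)+(k 1:ℂ)^2*(k 2:ℂ))*Complex.I)*E 0 + (-((k 1:ℂ)^2*(k 2:ℂ)+(k 2:ℂ)^3+3*(k 2:ℂ)^2*(rr k:ℂ)+3*(k 0:ℂ)^2*(rr k:ℂ)+(k 0:ℂ)^2*(k 2:ℂ)) - (k 0:ℂ)*(k 1:ℂ)*(rr k:ℂ)*Complex.I)*E 1 + ((k 0:ℂ)^2*(k 1:ℂ)+(k 1:ℂ)^3+(k 1:ℂ)*(k 2:ℂ)^2+3*(k 1:ℂ)*(k 2:ℂ)*(rr k:ℂ) - (-(k 0:ℂ)^3-(k 0:ℂ)*(k 2:ℂ)^2+(k 0:ℂ)*(k 2:ℂ)*(rr k:ℂ)-(k 0:ℂ)*(k 1:ℂ)^2)*Complex.I)*E 2)*((k 0:ℂ)^2*(k 1:ℂ)+(k 1:ℂ)^3+(k 1:ℂ)*(k 2:ℂ)^2+3*(k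 1:ℂ)*(k 2:ℂ)*(rr k:ℂ) + (-(k 0:ℂ)^3-(k 0:ℂ)*(k 2:ℂ)^2+(k 0:ℂ)*(k 2:ℂ)*(rr k:ℂ)-(k 0:ℂ)*(k 1:ℂ)^2)*Complex.I)
          = ((nn k : ℝ):ℂ)*((nn k : ℝ):ℂ)*((rr k:ℂ)^2*E 2) := by
        linear_combination ((-10 : ℂ)*(k 2:ℂ)^3*(rr k:ℂ)^2 + (-4 : ℂ)*(k 2:ℂ)^4*(rr k:ℂ) + (-2 : ℂ)*(k 2:ℂ)^5 + (-1 : ℂ)*(k 1:ℂ)^2*(k 2:ℂ)*(rr k:ℂ)^2 + (-4 : ℂ)*(k 1:ℂ)^2*(k 2:ℂ)^2*(rr k:ℂ) + (-3 : ℂ)*(k 1:ℂ)^2*(k 2:ℂ)^3 + (-1 : ℂ)*(k 1:ℂ)^4*(k 2:ℂ) + (-9 : ℂ)*(k 0:ℂ)^2*(k 2:ℂ)*(rr k:ℂ)^2 + (-4 : ℂ)*(k 0:ℂ)^2*(k 2:ℂ)^2*(rr k:ℂ) + (-3 : ℂ)*(k 0:ℂ)^2*(k 2:ℂ)^3 +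 (-2 : ℂ)*(k 0:ℂ)^2*(k 1:ℂ)^2*(k 2:ℂ) + (-1 : ℂ)*(k 0:ℂ)^4*(k 2:ℂ)) * hKE + ((-10 : ℂ)*(k 2:ℂ)^2*(rr k:ℂ)^2*E 2 + (-4 : ℂ)*(k 2:ℂ)^3*(rr k:ℂ)*E 2 + (-2 : ℂ)*(k 2:ℂ)^4*E 2 + (-3 : ℂ)*(k 1:ℂ)*(k 2:ℂ)*(rr k:ℂ)^2*Complex.I*E 0 + (k 1:ℂ)*(k 2:ℂ)*(rr k:ℂ)^2*Complex.I^2*E 1 + (2 : ℂ)*(k 1:ℂ)*(k 2:ℂ)^2*(rr k:ℂ)*Complex.I*E 0 + (-2 : ℂ)*(k 1:ℂ)*(k 2:ℂ)^2*(rr k:ℂ)*Complex.I^2*E 1 + (k 1:ℂ)*(k 2:ℂ)^3*E 1 + (k 1:ℂ)*(k 2:ℂ)^3*Complex.I*E 0 + (2 : ℂ)*(k 1:ℂ)*(k 2:ℂ)^3*Complex.I^2*E 1 + (-1 : ℂ)*(k 1:ℂ)^2*(rr k:ℂ)^2*E 2 + (-1 : ℂ)*(k 1:ℂ)^2*(rr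 k:ℂ)^2*Complex.I^2*E 2 + (-4 : ℂ)*(k 1:ℂ)^2*(k 2:ℂ)*(rr k:ℂ)*E 2 + (2 : ℂ)*(k 1:ℂ)^2*(k 2:ℂ)*(rr k:ℂ)*Complex.I^2*E 2 + (-4 : ℂ)*(k 1:ℂ)^2*(k 2:ℂ)^2*E 2 + (-2 : ℂ)*(k 1:ℂ)^2*(k 2:ℂ)^2*Complex.I^2*E 2 + (-1 : ℂ)*(k 1:ℂ)^3*(rr k:ℂ)*Complex.I*E 0 + (k 1:ℂ)^3*(k 2:ℂ)*E 1 + (k 1:ℂ)^3*(k 2:ℂ)*Complex.I*E 0 + (k 1:ℂ)^3*(k 2:ℂ)*Complex.I^2*E 1 + (-2 : ℂ)*(k 1:ℂ)^4*E 2 + (-1 : ℂ)*(k 1:ℂ)^4*Complex.I^2*E 2 + (-9 : ℂ)*(k 0:ℂ)*(k 2:ℂ)*(rr k:ℂ)^2*E 0 + (3 : ℂ)*(k 0:ℂ)*(k 2:ℂ)*(rr k:ℂ)^2*Complex.I*E 1 + (-6 : ℂ)*(k 0:ℂ)*(k 2:ℂ)^2*(rr k:ℂ)*E 0 + (-2 :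 ℂ)*(k 0:ℂ)*(k 2:ℂ)^2*(rr k:ℂ)*Complex.I*E 1 + (-1 : ℂ)*(k 0:ℂ)*(k 2:ℂ)^3*Complex.I*E 1 + (k 0:ℂ)*(k 2:ℂ)^3*Complex.I^2*E 0 + (-3 : ℂ)*(k 0:ℂ)*(k 1:ℂ)^2*(rr k:ℂ)*E 0 + (k 0:ℂ)*(k 1:ℂ)^2*(rr k:ℂ)*Complex.I*E 1 + (k 0:ℂ)*(k 1:ℂ)^2*(rr k:ℂ)*Complex.I^2*E 0 + (-1 : ℂ)*(k 0:ℂ)*(k 1:ℂ)^2*(k 2:ℂ)*Complex.I*E 1 + (2 : ℂ)*(k 0:ℂ)^2*(k 2:ℂ)*(rr k:ℂ)*E 2 + (-3 : ℂ)*(k 0:ℂ)^2*(k 2:ℂ)^2*E 2 + (-1 : ℂ)*(k 0:ℂ)^2*(k 2:ℂ)^2*Complex.I^2*E 2 + (3 : ℂ)*(k 0:ℂ)^2*(k 1:ℂ)*(rr k:ℂ)*E 1 + (3 : ℂ)*(k 0:ℂ)^2*(k 1:ℂ)*(rr k:ℂ)*Complex.I*E 0 + (-1 : ℂ)*(k 0:ℂ)^2*(k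 1:ℂ)*(rr k:ℂ)*Complex.I^2*E 1 + (k 0:ℂ)^2*(k 1:ℂ)*(k 2:ℂ)*E 1 + (k 0:ℂ)^2*(k 1:ℂ)*(k 2:ℂ)*Complex.I*E 0 + (k 0:ℂ)^2*(k 1:ℂ)*(k 2:ℂ)*Complex.I^2*E 1 + (-3 : ℂ)*(k 0:ℂ)^2*(k 1:ℂ)^2*E 2 + (-1 : ℂ)*(k 0:ℂ)^2*(k 1:ℂ)^2*Complex.I^2*E 2 + (-3 : ℂ)*(k 0:ℂ)^3*(rr k:ℂ)*Complex.I*E 1 + (-1 : ℂ)*(k 0:ℂ)^3*(k 2:ℂ)*Complex.I*E 1 + (-1 : ℂ)*(k 0:ℂ)^4*E 2) * hRc + ((-2 : ℂ)*(k 1:ℂ)*(k 2:ℂ)^4*(rr k:ℂ)*E 1 + (2 : ℂ)*(k 1:ℂ)*(k 2:ℂ)^5*E 1 + (2 : ℂ)*(k 1:ℂ)^2*(k 2:ℂ)^3*(rr k:ℂ)*E 2 + (-2 : ℂ)*(k 1:ℂ)^2*(k 2:ℂ)^4*E 2 + (-2 : ℂ)*(k 1:ℂ)^3*(k 2:ℂ)^2*(rr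 k:ℂ)*E 1 + (3 : ℂ)*(k 1:ℂ)^3*(k 2:ℂ)^3*E 1 + (2 : ℂ)*(k 1:ℂ)^4*(k 2:ℂ)*(rr k:ℂ)*E 2 + (-3 : ℂ)*(k 1:ℂ)^4*(k 2:ℂ)^2*E 2 + (k 1:ℂ)^5*(k 2:ℂ)*E 1 + (-1 : ℂ)*(k 1:ℂ)^6*E 2 + (-2 : ℂ)*(k 0:ℂ)*(k 2:ℂ)^4*(rr k:ℂ)*E 0 + (2 : ℂ)*(k 0:ℂ)*(k 2:ℂ)^5*E 0 + (-2 : ℂ)*(k 0:ℂ)*(k 1:ℂ)^2*(k 2:ℂ)^2*(rr k:ℂ)*E 0 + (3 : ℂ)*(k 0:ℂ)*(k 1:ℂ)^2*(k 2:ℂ)^3*E 0 + (k 0:ℂ)*(k 1:ℂ)^4*(k 2:ℂ)*E 0 + (2 : ℂ)*(k 0:ℂ)^2*(k 2:ℂ)^3*(rr k:ℂ)*E 2 + (-2 : ℂ)*(k 0:ℂ)^2*(k 2:ℂ)^4*E 2 + (-2 : ℂ)*(k 0:ℂ)^2*(k 1:ℂ)*(k 2:ℂ)^2*(rr k:ℂ)*E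 1 + (3 : ℂ)*(k 0:ℂ)^2*(k 1:ℂ)*(k 2:ℂ)^3*E 1 + (4 : ℂ)*(k 0:ℂ)^2*(k 1:ℂ)^2*(k 2:ℂ)*(rr k:ℂ)*E 2 + (-6 : ℂ)*(k 0:ℂ)^2*(k 1:ℂ)^2*(k 2:ℂ)^2*E 2 + (2 : ℂ)*(k 0:ℂ)^2*(k 1:ℂ)^3*(k 2:ℂ)*E 1 + (-3 : ℂ)*(k 0:ℂ)^2*(k 1:ℂ)^4*E 2 + (-2 : ℂ)*(k 0:ℂ)^3*(k 2:ℂ)^2*(rr k:ℂ)*E 0 + (3 : ℂ)*(k 0:ℂ)^3*(k 2:ℂ)^3*E 0 + (2 : ℂ)*(k 0:ℂ)^3*(k 1:ℂ)^2*(k 2:ℂ)*E 0 + (2 : ℂ)*(k 0:ℂ)^4*(k 2:ℂ)*(rr k:ℂ)*E 2 + (-3 : ℂ)*(k 0:ℂ)^4*(k 2:ℂ)^2*E 2 + (k 0:ℂ)^4*(k 1:ℂ)*(k 2:ℂ)*E 1 + (-3 : ℂ)*(k 0:ℂ)^4*(k 1:ℂ)^2*E 2 + (k 0:ℂ)^5*(k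 2:ℂ)*E 0 + (-1 : ℂ)*(k 0:ℂ)^6*E 2) * Complex.I_sq + (-((rr k:ℂ)^2*E 2))*hQC
      have h2 : E 2 = ((-((k 1:ℂ)^2+(k 2:ℂ)^2+3*(k 2:ℂ)*(rr k:ℂ)) + (k 0:ℂ)*(k 1:ℂ)*Complex.I)*E 0 + ((k 0:ℂ)*(k 1:ℂ) - ((k 0:ℂ)^2+(k 2:ℂ)^2-(k 2:ℂ)*(rr k:ℂ))*Complex.I)*E 1 + (3*(k 0:ℂ)*(rr k:ℂ)+(k 0:ℂ)*(k 2:ℂ) - (k 1:ℂ)*((rr k:ℂ)-(k 2:ℂ))*Complex.I)*E 2)/((nn k : ℝ):ℂ) * (vv k 2 / ((nn k : ℝ):ℂ))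
          + ((3*(k 0:ℂ)*(k 1:ℂ)*(rr k:ℂ) - ((k 0:ℂ)^2*(k 2:ℂ)+(k 2:ℂ)^3-(k 2:ℂ)^2*(rr k:ℂ)-(k 1:ℂ)^2*(rr k:ℂ)+(k 1:ℂ)^2*(k 2:ℂ))*Complex.I)*E 0 + (-((k 1:ℂ)^2*(k 2:ℂ)+(k 2:ℂ)^3+3*(k 2:ℂ)^2*(rr k:ℂ)+3*(k 0:ℂ)^2*(rr k:ℂ)+(k 0:ℂ)^2*(k 2:ℂ)) - (k 0:ℂ)*(k 1:ℂ)*(rr k:ℂ)*Complex.I)*E 1 + ((k 0:ℂ)^2*(k 1:ℂ)+(k 1:ℂ)^3+(k 1:ℂ)*(k 2:ℂ)^2+3*(k 1:ℂ)*(k 2:ℂ)*(rr k:ℂ) - (-(k 0:ℂ)^3-(k 0:ℂ)*(k 2:ℂ)^2+(k 0:ℂ)*(k 2:ℂ)*(rr k:ℂ)-(k 0:ℂ)*(k 1:ℂ)^2)*Complex.I)*E 2)/((rr k:ℂ)*((nn k : ℝ):ℂ)) * (ww k 2 / ((rr k:ℂ)*((nn k : ℝ):ℂ))) := by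
        rw [div_mul_div_comm, div_mul_div_comm,
          div_add_div _ _ (mul_ne_zero hN0 hN0) (mul_ne_zero hRN0 hRN0), eq_div_iff
            (mul_ne_zero (mul_ne_zero hN0 hN0) (mul_ne_zero hRN0 hRN0))]
        simp only [vv, ww, Matrix.cons_val_zero, Matrix.cons_val_one, Matrix.head_cons, Matrix.cons_val_two, Matrix.tail_cons, Fin.isValue]
        linear_combination (-(((nn k : ℝ):ℂ)*((nn k : ℝ):ℂ))) * key6_2
      funext a
      fin_cases a
      · exact h0
      · exact h1
      · exact h2
end

section
/- There is no continuous map ε : S² → ℂ³ such that for every unit vector k ∈ S²: ε(k) ≠ 0, k·ε(k) = 0, and conj(ε(k)) ×_ℂ ε(k) = 0. Equivalently, there is no globally continuous nonvanishing linearly polarized transverse polarization field on the momentum sphere, so no global polarization basis of the electromagnetic plasma-wave bundle can consist of linearly polarized waves. -/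
/-!
Write `k(φ, θ)` for the point of `S²` in spherical coordinates and `(k, e_φ, e_θ)` for the
orthonormal spherical frame there, and put `w(φ, θ) = ε(k)·e_φ + i ε(k)·e_θ`. If `E` is linearly
polarized then `conj(E·u) (E·v)` is real for all real `u, v`, since it differs from its conjugate
by `(conj E × E)·(u × v)`; so `E·e_φ + i E·e_θ = 0` forces `E·e_φ = E·e_θ = 0`, and a transverse
`E` orthogonal to the whole frame is `0`. Hence `w` is continuous and nowhere zero, and the
latitude loops `θ ↦ w(φ, θ)` all have the same winding number around `0`. But the frame turns
once around each pole, in opposite senses: `w(0, θ) = e^{-iθ} w(0, 0)` and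
`w(π, θ) = e^{iθ} w(π, 0)`.
-/

open scoped BigOperators ComplexConjugate

/-- The Levi-Civita symbol on three indices. -/
def levicivita (a b c : Fin 3) : ℤ :=
  (((b : ℤ) - (a : ℤ)) * ((c : ℤ) - (b : ℤ)) * ((c : ℤ) - (a : ℤ))) / 2

/-- The complexified cross product on `ℂ³`. -/
noncomputable def crossC (u v : Fin 3 → ℂ) : Fin 3 → ℂ :=
  fun a => ∑ b, ∑ c, (levicivita a b c : ℂ) * u b * v c

open Complex Matrix
open scoped Real

theorem crossC_eq_crossProduct (u v : Fin 3 → ℂ) : crossC u v = u ⨯₃ v := by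
  funext a
  fin_cases a <;> simp [crossC, levicivita, Fin.sum_univ_three, cross_apply] <;> ring

namespace Complex

theorem exists_continuous_exp_comp_eq {A : Type*} [TopologicalSpace A]
    [SimplyConnectedSpace A] [LocallyPathConnectedSpace A] {G : A → ℂ} (hG : Continuous G)
    (hG0 : ∀ x, G x ≠ 0) : ∃ L : A → ℂ, Continuous L ∧ ∀ x, exp (L x) = G x := by
  obtain ⟨x₀⟩ := (inferInstance : Nonempty A)
  obtain ⟨L, ⟨-, hL⟩, -⟩ := isCoveringMapOn_exp.existsUnique_continuousMap_lifts
    ⟨G, hG⟩ (exp_log (hG0 x₀)) hG0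
  exact ⟨L, L.continuous, fun x => congrFun hL x⟩

theorem sub_eq_sub_of_exp_eq {A : Type*} [TopologicalSpace A] [PreconnectedSpace A]
    {f g : A → ℂ} (hf : Continuous f) (hg : Continuous g) (hfg : ∀ x, exp (f x) = exp (g x))
    (x y : A) : f x - g x = f y - g y :=
  isCoveringMap_exp.const_of_comp (hf.sub hg) (fun x y => by simp [exp_sub, hfg]) x y

theorem winding_eq_of_nonvanishing_homotopy {G : ℝ × ℝ → ℂ} (hG : Continuous G)
    (hG0 : ∀ z, G z ≠ 0) (hloop : ∀ φ, G (φ, 2 * π) = G (φ, 0)) {a b : ℝ} {m n : ℤ}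
    (ha : ∀ θ, G (a, θ) = exp (m * θ * I) * G (a, 0))
    (hb : ∀ θ, G (b, θ) = exp (n * θ * I) * G (b, 0)) : m = n := by
  obtain ⟨L, hL, hLG⟩ := exists_continuous_exp_comp_eq hG hG0
  have hincrement : ∀ c (k : ℤ), (∀ θ, G (c, θ) = exp (k * θ * I) * G (c, 0)) →
      L (c, 2 * π) - L (c, 0) = 2 * π * k * I := by
    intro c k hc
    have := sub_eq_sub_of_exp_eq (f := fun θ => L (c, θ)) (g := fun θ => k * θ * I + L (c, 0))
      (by fun_prop) (by fun_prop) (fun θ => by rw [hLG, exp_add, hLG, hc]) (2 * π) 0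
    push_cast at this
    linear_combination this
  have hconst := sub_eq_sub_of_exp_eq (hL.comp (Continuous.prodMk_left (2 * π)))
    (hL.comp (Continuous.prodMk_left 0)) (fun φ => by simp only [Function.comp_apply, hLG, hloop])
    a b
  simp only [Function.comp_apply, hincrement a m ha, hincrement b n hb] at hconst
  have h2πI : (2 * π * I : ℂ) ≠ 0 := by simp [Real.pi_ne_zero, I_ne_zero]
  have hmn : (m : ℂ) = n := mul_left_cancel₀ h2πI (by linear_combination hconst)
  exact_mod_cast hmn

end Complex

theorem conj_dotProduct_mul_dotProduct_comm {E : Fin 3 → ℂ}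
    (hE : (fun a => conj (E a)) ⨯₃ E = 0) (u v : Fin 3 → ℝ) :
    conj ((ofReal ∘ u) ⬝ᵥ E) * ((ofReal ∘ v) ⬝ᵥ E)
      = (ofReal ∘ u) ⬝ᵥ E * conj ((ofReal ∘ v) ⬝ᵥ E) := by
  have h := cross_dot_cross (fun a => conj (E a)) E (ofReal ∘ u) (ofReal ∘ v)
  have hconj : ∀ w : Fin 3 → ℝ,
      (fun a => conj (E a)) ⬝ᵥ (ofReal ∘ w) = conj ((ofReal ∘ w) ⬝ᵥ E) := by
    intro w
    simp [dotProduct, mul_comm]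
  rw [hE, zero_dotProduct, hconj, hconj, dotProduct_comm E, dotProduct_comm E] at h
  linear_combination -h

theorem Complex.eq_zero_of_add_I_mul_eq_zero {A B : ℂ} (hAB : conj A * B = A * conj B)
    (h : A + I * B = 0) : B = 0 := by
  have hA : A = -I * B := by linear_combination h
  rw [hA] at hAB
  simp only [map_mul, map_neg, conj_I] at hAB
  have : B * conj B = 0 := by linear_combination (-I / 2) * hAB + (B * conj B) * I_sq
  simpa using this

noncomputable section

def sphericalPoint (φ θ : ℝ) : Fin 3 → ℝ :=
  ![Real.sin φ * Real.cos θ, Real.sin φ * Real.sin θ, Real.cos φ]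

def polarUnit (φ θ : ℝ) : Fin 3 → ℝ :=
  ![Real.cos φ * Real.cos θ, Real.cos φ * Real.sin θ, -Real.sin φ]

def azimuthalUnit (θ : ℝ) : Fin 3 → ℝ :=
  ![-Real.sin θ, Real.cos θ, 0]

def helicityComponent (E : Fin 3 → ℂ) (φ θ : ℝ) : ℂ :=
  (ofReal ∘ polarUnit φ θ) ⬝ᵥ E + I * (ofReal ∘ azimuthalUnit θ) ⬝ᵥ E

end

theorem sum_sq_sphericalPoint (φ θ : ℝ) : ∑ a, sphericalPoint φ θ a ^ 2 = 1 := by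
  simp only [sphericalPoint, Fin.sum_univ_three, cons_val_zero, cons_val_one, cons_val_two,
    tail_cons, head_cons]
  linear_combination (Real.sin φ ^ 2) * Real.sin_sq_add_cos_sq θ + Real.sin_sq_add_cos_sq φ

theorem continuous_sphericalPoint : Continuous fun z : ℝ × ℝ => sphericalPoint z.1 z.2 := by
  unfold sphericalPoint
  fun_prop

theorem sphericalPoint_two_pi (φ : ℝ) : sphericalPoint φ (2 * π) = sphericalPoint φ 0 := by
  simp [sphericalPoint]

theorem sphericalPoint_zero (θ : ℝ) : sphericalPoint 0 θ = sphericalPoint 0 0 := by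
  simp [sphericalPoint]

theorem sphericalPoint_pi (θ : ℝ) : sphericalPoint π θ = sphericalPoint π 0 := by
  simp [sphericalPoint]

theorem eq_zero_of_dotProduct_sphericalFrame_eq_zero {E : Fin 3 → ℂ} {φ θ : ℝ}
    (hk : (ofReal ∘ sphericalPoint φ θ) ⬝ᵥ E = 0) (hφ : (ofReal ∘ polarUnit φ θ) ⬝ᵥ E = 0)
    (hθ : (ofReal ∘ azimuthalUnit θ) ⬝ᵥ E = 0) : E = 0 := by
  simp only [sphericalPoint, polarUnit, azimuthalUnit, dotProduct, Fin.sum_univ_three,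
    Function.comp_apply, cons_val_zero, cons_val_one, cons_val_two, tail_cons, head_cons,
    ofReal_mul, ofReal_neg, ofReal_zero, zero_mul, add_zero] at hk hφ hθ
  have hs : (Real.sin φ : ℂ) ^ 2 + (Real.cos φ : ℂ) ^ 2 = 1 := mod_cast Real.sin_sq_add_cos_sq φ
  have ht : (Real.sin θ : ℂ) ^ 2 + (Real.cos θ : ℂ) ^ 2 = 1 := mod_cast Real.sin_sq_add_cos_sq θ
  have h0 : E 0 = 0 := by
    linear_combination (Real.sin φ * Real.cos θ : ℂ) * hk + (Real.cos φ * Real.cos θ : ℂ) * hφ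
      - (Real.sin θ : ℂ) * hθ - (E 0 * Real.cos θ ^ 2 + E 1 * Real.sin θ * Real.cos θ) * hs
      - E 0 * ht
  have h1 : E 1 = 0 := by
    linear_combination (Real.sin φ * Real.sin θ : ℂ) * hk + (Real.cos φ * Real.sin θ : ℂ) * hφ
      + (Real.cos θ : ℂ) * hθ - (E 1 * Real.sin θ ^ 2 + E 0 * Real.sin θ * Real.cos θ) * hs
      - E 1 * ht
  have h2 : E 2 = 0 := by
    linear_combination (Real.cos φ : ℂ) * hk - (Real.sin φ : ℂ) * hφ - E 2 * hs
  ext a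
  fin_cases a <;> assumption

theorem helicityComponent_ne_zero {E : Fin 3 → ℂ} {φ θ : ℝ} (hE : E ≠ 0)
    (hk : (ofReal ∘ sphericalPoint φ θ) ⬝ᵥ E = 0) (hlin : (fun a => conj (E a)) ⨯₃ E = 0) :
    helicityComponent E φ θ ≠ 0 := by
  intro h
  rw [helicityComponent] at h
  have hθ := eq_zero_of_add_I_mul_eq_zero (conj_dotProduct_mul_dotProduct_comm hlin _ _) h
  rw [hθ, mul_zero, add_zero] at h
  exact hE (eq_zero_of_dotProduct_sphericalFrame_eq_zero hk h hθ)

theorem Continuous.helicityComponent {X : Type*} [TopologicalSpace X] {E : X → Fin 3 → ℂ}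
    {φ θ : X → ℝ} (hE : Continuous E) (hφ : Continuous φ) (hθ : Continuous θ) :
    Continuous fun x => helicityComponent (E x) (φ x) (θ x) := by
  simp only [_root_.helicityComponent, polarUnit, azimuthalUnit, dotProduct, Fin.sum_univ_three]
  fun_prop

theorem helicityComponent_two_pi (E : Fin 3 → ℂ) (φ : ℝ) :
    helicityComponent E φ (2 * π) = helicityComponent E φ 0 := by
  simp [helicityComponent, polarUnit, azimuthalUnit]

theorem helicityComponent_zero (E : Fin 3 → ℂ) (θ : ℝ) :
    helicityComponent E 0 θ = exp (-θ * I) * helicityComponent E 0 0 := by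
  simp only [helicityComponent, polarUnit, azimuthalUnit, dotProduct, Fin.sum_univ_three,
    Function.comp_apply, cons_val_zero, cons_val_one, cons_val_two, tail_cons, head_cons,
    Real.sin_zero, Real.cos_zero, neg_zero, ofReal_mul, ofReal_neg, ofReal_zero, ofReal_one]
  rw [exp_mul_I, cos_neg, sin_neg, ← ofReal_cos, ← ofReal_sin]
  linear_combination ((Real.sin θ : ℂ) * E 1) * I_sq

theorem helicityComponent_pi (E : Fin 3 → ℂ) (θ : ℝ) :
    helicityComponent E π θ = exp (θ * I) * helicityComponent E π 0 := by
  simp only [helicityComponent, polarUnit, azimuthalUnit, dotProduct, Fin.sum_univ_three,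
    Function.comp_apply, cons_val_zero, cons_val_one, cons_val_two, tail_cons, head_cons,
    Real.sin_pi, Real.cos_pi, Real.sin_zero, Real.cos_zero, neg_zero, ofReal_mul, ofReal_neg,
    ofReal_zero, ofReal_one]
  rw [exp_mul_I, ← ofReal_cos, ← ofReal_sin]
  linear_combination (-(Real.sin θ : ℂ) * E 1) * I_sq

/-- There is no continuous, nowhere-vanishing, transverse, linearly polarized
polarization field on the momentum sphere: no continuous `ε : S² → ℂ³` with
`ε(k) ≠ 0`, `k·ε(k) = 0` and `conj(ε(k)) ×_ℂ ε(k) = 0` everywhere.  Hence no global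
polarization basis of the electromagnetic plasma-wave bundle can consist of linearly
polarized waves. -/
theorem no_global_linear_polarization :
    ¬ ∃ ε : (Fin 3 → ℝ) → (Fin 3 → ℂ),
      ContinuousOn ε {k : Fin 3 → ℝ | ∑ a, (k a) ^ 2 = 1} ∧
      ∀ k : Fin 3 → ℝ, (∑ a, (k a) ^ 2 = 1) →
        ε k ≠ 0 ∧
        (∑ a, (k a : ℂ) * ε k a = 0) ∧
        crossC (fun a => conj (ε k a)) (ε k) = 0 := by
  rintro ⟨ε, hcont, hε⟩
  have hεcont : Continuous fun z : ℝ × ℝ => ε (sphericalPoint z.1 z.2) :=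
    hcont.comp_continuous continuous_sphericalPoint fun z => sum_sq_sphericalPoint z.1 z.2
  set G : ℝ × ℝ → ℂ := fun z => helicityComponent (ε (sphericalPoint z.1 z.2)) z.1 z.2
  have hG0 : ∀ z, G z ≠ 0 := fun z => by
    obtain ⟨hne, hk, hlin⟩ := hε _ (sum_sq_sphericalPoint z.1 z.2)
    exact helicityComponent_ne_zero hne hk (crossC_eq_crossProduct _ _ ▸ hlin)
  have hwinding : (-1 : ℤ) = 1 :=
    winding_eq_of_nonvanishing_homotopy (G := G) (a := 0) (b := π)
      (hεcont.helicityComponent continuous_fst continuous_snd) hG0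
      (fun φ => by simp only [G, sphericalPoint_two_pi, helicityComponent_two_pi])
      (fun θ => by simpa [G, sphericalPoint_zero θ] using helicityComponent_zero _ θ)
      (fun θ => by simpa [G, sphericalPoint_pi θ] using helicityComponent_pi _ θ)
  exact absurd hwinding (by decide)
end

section
/- For each sign s ∈ {+1, −1}, there is no continuous map E : S² → ℂ³ such that for every unit vector k ∈ S²: E(k) ≠ 0 and k ×_ℂ E(k) = −i s E(k). Equivalently, the right- and left-circularly polarized bundles ζ₊ and ζ₋ admit no global continuous nonvanishing section: every continuous field of circularly polarized waves of fixed helicity over the full momentum sphere must vanish at some point. -/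
open scoped BigOperators ComplexConjugate
open Complex

private lemma telescope_prod (f : ℕ → ℂ) (hf : ∀ j, f j ≠ 0) (n : ℕ) :
    f 0 * ∏ j ∈ Finset.range n, f (j+1) / f j = f n := by
  induction n with
  | zero => simp
  | succ n ih =>
    rw [Finset.prod_range_succ, ← mul_assoc, ih, mul_div_cancel₀ _ (hf n)]

/-- A continuous nonvanishing function on the plane has a continuous logarithm
on the closed ball of radius 2. -/
private lemma exists_clog (F : ℝ × ℝ → ℂ) (hF : Continuous F) (hne : ∀ x, F x ≠ 0) :
    ∃ G : ℝ × ℝ → ℂ, ContinuousOn G (Metric.closedBall 0 2) ∧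
      ∀ x ∈ Metric.closedBall (0:ℝ×ℝ) 2, Complex.exp (G x) = F x := by
  set K : Set (ℝ × ℝ) := Metric.closedBall 0 2 with hK
  have hKc : IsCompact K := isCompact_closedBall _ _
  obtain ⟨x₀, hx₀K, hx₀'⟩ := hKc.exists_isMinOn ⟨0, by simp [hK]⟩
    (continuous_norm.comp hF).continuousOn
  have hx₀ : ∀ y ∈ K, ‖F x₀‖ ≤ ‖F y‖ := fun y hy => hx₀' hy
  set m : ℝ := ‖F x₀‖ with hm
  have hm0 : 0 < m := norm_pos_iff.mpr (hne x₀)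
  obtain ⟨δ, hδ0, hδ⟩ := Metric.uniformContinuousOn_iff.mp
    (hKc.uniformContinuousOn_of_continuous hF.continuousOn) m hm0
  obtain ⟨n, hn⟩ := exists_nat_gt (2 / δ)
  have hn0 : 0 < (n:ℝ) := lt_of_le_of_lt (by positivity) hn
  have hstep : ∀ x ∈ K, ∀ c c' : ℝ, c ∈ Set.Icc (0:ℝ) 1 → c' ∈ Set.Icc (0:ℝ) 1 →
      |c - c'| ≤ 1 / n → ‖F (c • x) / F (c' • x) - 1‖ < 1 := by
    intro x hx c c' hc hc' hcc
    have hxn : ‖x‖ ≤ 2 := by simpa [hK, dist_eq_norm] using hx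
    have hmem : ∀ d : ℝ, d ∈ Set.Icc (0:ℝ) 1 → d • x ∈ K := by
      intro d hd
      simp only [hK, Metric.mem_closedBall, dist_zero_right, norm_smul]
      calc ‖d‖ * ‖x‖ ≤ 1 * 2 := by
            apply mul_le_mul _ hxn (norm_nonneg _) zero_le_one
            rw [Real.norm_eq_abs, _root_.abs_of_nonneg hd.1]; exact hd.2
        _ = 2 := by norm_num
    have hdist : dist (c • x) (c' • x) < δ := by
      rw [dist_eq_norm, ← sub_smul, norm_smul, Real.norm_eq_abs]
      calc |c - c'| * ‖x‖ ≤ (1/n) * 2 := by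
            apply mul_le_mul hcc hxn (norm_nonneg _) (by positivity)
        _ = 2 / n := by ring
        _ < δ := by
            rw [div_lt_iff₀ hn0]
            have := (div_lt_iff₀ hδ0).mp hn
            nlinarith
    have h1 : ‖F (c • x) - F (c' • x)‖ < m := by
      simpa [dist_eq_norm] using hδ _ (hmem c hc) _ (hmem c' hc') hdist
    have h2 : m ≤ ‖F (c' • x)‖ := hx₀ _ (hmem c' hc')
    have hFc' : F (c' • x) ≠ 0 := hne _
    rw [div_sub_one hFc', norm_div, div_lt_one (norm_pos_iff.mpr hFc')]
    exact lt_of_lt_of_le h1 h2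
  have hslit : ∀ (z : ℂ), ‖z - 1‖ < 1 → z ∈ Complex.slitPlane := by
    intro z hz
    rw [Complex.mem_slitPlane_iff]
    left
    have h1 : |(z - 1).re| ≤ ‖z - 1‖ := Complex.abs_re_le_norm _
    have h2 : z.re - 1 > -1 := by
      have := neg_abs_le (z-1).re
      have : (z-1).re > -1 := by linarith
      simpa [Complex.sub_re] using this
    linarith
  refine ⟨fun x => Complex.log (F 0) + ∑ j ∈ Finset.range n,
      Complex.log (F ((((j:ℝ)+1)/n) • x) / F (((j:ℝ)/n) • x)), ?_, ?_⟩
  · apply ContinuousOn.add continuousOn_const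
    apply continuousOn_finset_sum
    intro j hj
    have hj' : (j:ℝ) + 1 ≤ n := by
      have := Finset.mem_range.mp hj
      exact_mod_cast Nat.succ_le_of_lt this
    have hcj : ((j:ℝ)/n) ∈ Set.Icc (0:ℝ) 1 := by
      constructor
      · positivity
      · rw [div_le_one hn0]; linarith
    have hcj' : (((j:ℝ)+1)/n) ∈ Set.Icc (0:ℝ) 1 := by
      constructor
      · positivity
      · rw [div_le_one hn0]; linarith
    have habs : |((j:ℝ)+1)/n - (j:ℝ)/n| ≤ 1/n := by
      have he : ((j:ℝ)+1)/n - (j:ℝ)/n = 1/n := by ring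
      rw [he, _root_.abs_of_nonneg (by positivity)]
    apply ContinuousOn.clog
    · exact ((hF.comp (continuous_const_smul _)).div
        (hF.comp (continuous_const_smul _)) (fun x => hne _)).continuousOn
    · intro x hx
      exact hslit _ (hstep x hx _ _ hcj' hcj habs)
  · intro x hx
    rw [Complex.exp_add, Complex.exp_sum, Complex.exp_log (hne 0)]
    have hexp : ∀ j ∈ Finset.range n, Complex.exp (Complex.log
        (F ((((j:ℝ)+1)/n) • x) / F (((j:ℝ)/n) • x)))
        = F ((((j:ℝ)+1)/n) • x) / F (((j:ℝ)/n) • x) := by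
      intro j hj
      exact Complex.exp_log (div_ne_zero (hne _) (hne _))
    rw [Finset.prod_congr rfl hexp]
    have hf : ∀ j : ℕ, F ((((j:ℕ):ℝ)/n) • x) ≠ 0 := fun j => hne _
    have htel := telescope_prod (fun j => F ((((j:ℕ):ℝ)/n) • x)) hf n
    have h0 : (((0:ℕ):ℝ)/n) • x = (0 : ℝ × ℝ) := by norm_num
    have hnn : (((n:ℕ):ℝ)/n) • x = x := by
      rw [div_self (ne_of_gt hn0), one_smul]
    rw [h0, hnn] at htel
    rw [← htel]
    congr 1
    apply Finset.prod_congr rfl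
    intro j _
    have : (((j+1:ℕ):ℝ)/n) = (((j:ℕ):ℝ)+1)/n := by push_cast; ring
    rw [this]

/-- A continuous function on `[0,1]` whose values differ from `ψ 0` by integer
multiples of `2πi` takes the same value at the endpoints. -/
private lemma lattice_const (ψ : ℝ → ℂ) (hψ : ContinuousOn ψ (Set.Icc 0 1))
    (h : ∀ u ∈ Set.Icc (0:ℝ) 1, ∃ k : ℤ, ψ u - ψ 0 = (k : ℂ) * (2 * Real.pi * I)) :
    ψ 1 = ψ 0 := by
  set f : ℝ → ℝ := fun u => (ψ u).im with hf
  have hfc : ContinuousOn f (Set.Icc 0 1) := Complex.continuous_im.comp_continuousOn hψ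
  have hfk : ∀ u ∈ Set.Icc (0:ℝ) 1, ∃ k : ℤ, f u - f 0 = k * (2 * Real.pi) := by
    intro u hu
    obtain ⟨k, hk⟩ := h u hu
    refine ⟨k, ?_⟩
    have := congrArg Complex.im hk
    simpa [Complex.sub_im, Complex.mul_im, Complex.mul_re] using this
  have hre : ∀ u ∈ Set.Icc (0:ℝ) 1, (ψ u).re = (ψ 0).re := by
    intro u hu
    obtain ⟨k, hk⟩ := h u hu
    have := congrArg Complex.re hk
    simp only [Complex.sub_re, Complex.mul_re, Complex.mul_im] at this
    simp at this
    linarith [this]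
  have hmem0 : (0:ℝ) ∈ Set.Icc (0:ℝ) 1 := by norm_num
  have hmem1 : (1:ℝ) ∈ Set.Icc (0:ℝ) 1 := by norm_num
  have hpi : (0:ℝ) < Real.pi := Real.pi_pos
  have hkey : f 1 = f 0 := by
    by_contra hne
    rcases lt_or_gt_of_ne hne with hlt | hgt
    · obtain ⟨k1, hk1⟩ := hfk 1 hmem1
      have hk1neg : (k1:ℝ) ≤ -1 := by
        have : (k1:ℝ) * (2*Real.pi) < 0 := by linarith
        have hk1' : k1 < 0 := by
          by_contra hge
          push_neg at hge
          have : (0:ℝ) ≤ (k1:ℝ) * (2*Real.pi) := by positivity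
          linarith
        have hk1'' : k1 ≤ -1 := by omega
        exact_mod_cast hk1''
      have hval : f 0 - Real.pi ∈ Set.Icc (f 1) (f 0) := by
        constructor <;> nlinarith
      obtain ⟨u, hu, hfu⟩ := intermediate_value_Icc' (by norm_num : (0:ℝ) ≤ 1) hfc hval
      obtain ⟨k, hk⟩ := hfk u hu
      rw [hfu] at hk
      have : (2*(k:ℝ) + 1) * Real.pi = 0 := by linarith
      have h2k : (2*(k:ℝ) + 1) = 0 := by
        rcases mul_eq_zero.mp this with h | h
        · exact h
        · exact absurd h (ne_of_gt hpi)
      have : ((2*k + 1 : ℤ) : ℝ) = 0 := by push_cast; linarith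
      have : (2*k + 1 : ℤ) = 0 := by exact_mod_cast this
      omega
    · obtain ⟨k1, hk1⟩ := hfk 1 hmem1
      have hk1pos : (1:ℝ) ≤ (k1:ℝ) := by
        have : (0:ℝ) < (k1:ℝ) * (2*Real.pi) := by linarith
        have hk1' : 0 < k1 := by
          by_contra hge
          push_neg at hge
          have : (k1:ℝ) * (2*Real.pi) ≤ 0 := by
            apply mul_nonpos_of_nonpos_of_nonneg
            · exact_mod_cast hge
            · positivity
          linarith
        exact_mod_cast hk1'
      have hval : f 0 + Real.pi ∈ Set.Icc (f 0) (f 1) := by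
        constructor <;> nlinarith
      obtain ⟨u, hu, hfu⟩ := intermediate_value_Icc (by norm_num : (0:ℝ) ≤ 1) hfc hval
      obtain ⟨k, hk⟩ := hfk u hu
      rw [hfu] at hk
      have : (2*(k:ℝ) - 1) * Real.pi = 0 := by linarith
      have h2k : (2*(k:ℝ) - 1) = 0 := by
        rcases mul_eq_zero.mp this with h | h
        · exact h
        · exact absurd h (ne_of_gt hpi)
      have : ((2*k - 1 : ℤ) : ℝ) = 0 := by push_cast; linarith
      have : (2*k - 1 : ℤ) = 0 := by exact_mod_cast this
      omega
  exact Complex.ext (hre 1 hmem1) hkey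

private lemma crossC_apply (u v : Fin 3 → ℂ) (a : Fin 3) :
    crossC u v a = ![u 1 * v 2 - u 2 * v 1, u 2 * v 0 - u 0 * v 2,
      u 0 * v 1 - u 1 * v 0] a := by
  fin_cases a <;>
    simp [crossC, levicivita, Fin.sum_univ_three] <;> ring

/-- Key pointwise fact: the `e_θ`-component of a helicity vector is nonzero. -/
private lemma key_nonzero (s : ℝ) (hs : s = 1 ∨ s = -1) (sθ cθ sφ cφ : ℝ)
    (hθ : sθ^2 + cθ^2 = 1) (hφ : sφ^2 + cφ^2 = 1)
    (v : Fin 3 → ℂ) (hv : v ≠ 0)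
    (h0 : ((sθ*sφ : ℝ):ℂ) * v 2 - ((cθ:ℝ):ℂ) * v 1 = -I * (s:ℂ) * v 0)
    (h1 : ((cθ:ℝ):ℂ) * v 0 - ((sθ*cφ:ℝ):ℂ) * v 2 = -I * (s:ℂ) * v 1)
    (h2 : ((sθ*cφ:ℝ):ℂ) * v 1 - ((sθ*sφ:ℝ):ℂ) * v 0 = -I * (s:ℂ) * v 2) :
    ((cθ*cφ:ℝ):ℂ) * v 0 + ((cθ*sφ:ℝ):ℂ) * v 1 - ((sθ:ℝ):ℂ) * v 2 ≠ 0 := by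
  intro hα
  push_cast at h0 h1 h2 hα
  have hsC : (s:ℂ) ≠ 0 := by
    rcases hs with h | h <;> subst h <;> norm_num
  have hθC : ((sθ:ℂ))^2 + (cθ:ℂ)^2 = 1 := by exact_mod_cast congrArg (Complex.ofReal) hθ
  have hφC : ((sφ:ℂ))^2 + (cφ:ℂ)^2 = 1 := by exact_mod_cast congrArg (Complex.ofReal) hφ
  have hγ' : (-I * (s:ℂ)) * ((sθ:ℂ)*cφ * v 0 + (sθ:ℂ)*sφ * v 1 + (cθ:ℂ) * v 2) = 0 := by
    linear_combination (-(sθ:ℂ)*cφ) * h0 + (-(sθ:ℂ)*sφ) * h1 + (-(cθ:ℂ)) * h2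
  have hγ : (sθ:ℂ)*cφ * v 0 + (sθ:ℂ)*sφ * v 1 + (cθ:ℂ) * v 2 = 0 := by
    have hIs : (-I * (s:ℂ)) ≠ 0 := by
      simp [Complex.I_ne_zero, hsC]
    exact (mul_eq_zero.mp hγ').resolve_left hIs
  have hβ : (sφ:ℂ) * v 0 - (cφ:ℂ) * v 1 = 0 := by
    linear_combination ((cθ:ℂ)*cφ) * h0 + ((cθ:ℂ)*sφ) * h1 - (sθ:ℂ) * h2
      - (I*(s:ℂ)) * hα - ((sφ:ℂ)*(v 0) - (cφ:ℂ)*(v 1)) * hθC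
  have h00 : v 0 = 0 := by
    linear_combination ((cθ:ℂ)*cφ) * hα + (sφ:ℂ) * hβ + ((sθ:ℂ)*cφ) * hγ
      + (-(cφ:ℂ)^2 * v 0 - (cφ:ℂ)*(sφ:ℂ)*(v 1)) * hθC + (-(v 0)) * hφC
  have h11 : v 1 = 0 := by
    linear_combination ((cθ:ℂ)*sφ) * hα - (cφ:ℂ) * hβ + ((sθ:ℂ)*sφ) * hγ
      + (-(sφ:ℂ)^2 * v 1 - (sφ:ℂ)*(cφ:ℂ)*(v 0)) * hθC + (-(v 1)) * hφC
  have h22 : v 2 = 0 := by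
    linear_combination (-(sθ:ℂ)) * hα + (cθ:ℂ) * hγ + (-(v 2)) * hθC
  apply hv
  funext a
  fin_cases a
  · exact h00
  · exact h11
  · exact h22

private lemma cis_id (s : ℝ) (hs : s = 1 ∨ s = -1) (y : ℝ) :
    Complex.exp (I * (s:ℂ) * ((y:ℝ):ℂ)) = ((Real.cos y : ℝ):ℂ) + I * (s:ℂ) * ((Real.sin y : ℝ):ℂ) := by
  rcases hs with h | h <;> subst h
  · rw [show I * ((1:ℝ):ℂ) * (y:ℂ) = (y:ℂ) * I by push_cast; ring, Complex.exp_mul_I]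
    push_cast; ring
  · rw [show I * ((-1:ℝ):ℂ) * (y:ℂ) = ((-y:ℝ):ℂ) * I by push_cast; ring, Complex.exp_mul_I]
    push_cast
    rw [Complex.cos_neg, Complex.sin_neg]
    ring

/-- The right- and left-circularly polarized bundles `ζ₊` and `ζ₋` admit no global
continuous nonvanishing section: for either sign `s = ±1` there is no continuous
`E : S² → ℂ³` with `E(k) ≠ 0` and `k ×_ℂ E(k) = -i s E(k)` for every unit vector `k`. -/
theorem no_global_nonvanishing_circular_section (s : ℝ) (hs : s = 1 ∨ s = -1) :
    ¬ ∃ E : (Fin 3 → ℝ) → (Fin 3 → ℂ),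
      ContinuousOn E {k : Fin 3 → ℝ | ∑ a, (k a) ^ 2 = 1} ∧
      ∀ k : Fin 3 → ℝ, (∑ a, (k a) ^ 2 = 1) →
        E k ≠ 0 ∧
        crossC (fun a => (k a : ℂ)) (E k) = fun a => -Complex.I * (s : ℂ) * E k a := by
  rintro ⟨E, hEc, hE⟩
  have hsC : (s:ℂ) ≠ 0 := by
    rcases hs with h | h <;> subst h <;> norm_num
  have hpiC : ((Real.pi : ℝ):ℂ) ≠ 0 := by
    exact_mod_cast Real.pi_ne_zero
  -- sphere parametrization
  set kmap : ℝ → ℝ → (Fin 3 → ℝ) := fun x y =>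
    ![Real.sin x * Real.cos y, Real.sin x * Real.sin y, Real.cos x] with hkmap
  have hksph : ∀ x y : ℝ, ∑ a, (kmap x y a) ^ 2 = 1 := by
    intro x y
    simp only [hkmap, Fin.sum_univ_three, Matrix.cons_val_zero, Matrix.cons_val_one,
      Matrix.head_cons, Matrix.cons_val_two, Matrix.tail_cons]
    linear_combination (Real.sin x ^ 2) * (Real.sin_sq_add_cos_sq y)
      + Real.sin_sq_add_cos_sq x
  have hkc : Continuous fun p : ℝ × ℝ => kmap p.1 p.2 := by
    apply continuous_pi
    intro i
    fin_cases i <;> simp [hkmap] <;> fun_prop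
  have hEk : Continuous fun p : ℝ × ℝ => E (kmap p.1 p.2) :=
    hEc.comp_continuous hkc (fun p => hksph p.1 p.2)
  -- the winding function
  set w : ℝ → ℝ → ℂ := fun x y =>
    ((Real.cos x * Real.cos y : ℝ) : ℂ) * E (kmap x y) 0
    + ((Real.cos x * Real.sin y : ℝ) : ℂ) * E (kmap x y) 1
    - ((Real.sin x : ℝ) : ℂ) * E (kmap x y) 2 with hw
  have hwc : Continuous fun p : ℝ × ℝ => w p.1 p.2 := by
    apply Continuous.sub
    apply Continuous.add
    all_goals
      apply Continuous.mul
      · fun_prop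
      · exact (continuous_apply _).comp hEk
  have hwne : ∀ x y : ℝ, w x y ≠ 0 := by
    intro x y
    obtain ⟨hv, heq⟩ := hE (kmap x y) (hksph x y)
    have h0 := congrFun heq 0
    have h1 := congrFun heq 1
    have h2 := congrFun heq 2
    rw [crossC_apply] at h0 h1 h2
    simp only [hkmap, Matrix.cons_val_zero, Matrix.cons_val_one, Matrix.head_cons,
      Matrix.cons_val_two, Matrix.tail_cons] at h0 h1 h2
    exact key_nonzero s hs (Real.sin x) (Real.cos x) (Real.sin y) (Real.cos y)
      (Real.sin_sq_add_cos_sq x) (Real.sin_sq_add_cos_sq y) (E (kmap x y)) hv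
      (by push_cast at h0 ⊢; linear_combination h0)
      (by push_cast at h1 ⊢; linear_combination h1)
      (by push_cast at h2 ⊢; linear_combination h2)
  -- lift the rescaled function
  set F : ℝ × ℝ → ℂ := fun q => w (Real.pi * q.1) (2 * Real.pi * q.2) with hF
  have hFc : Continuous F := by
    have : F = (fun p : ℝ × ℝ => w p.1 p.2) ∘
        (fun q : ℝ × ℝ => (Real.pi * q.1, 2 * Real.pi * q.2)) := rfl
    rw [this]
    exact hwc.comp (by fun_prop)
  have hFne : ∀ q, F q ≠ 0 := fun q => hwne _ _
  obtain ⟨G, hGc, hGe⟩ := exists_clog F hFc hFne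
  have hmem : ∀ t u : ℝ, t ∈ Set.Icc (0:ℝ) 1 → u ∈ Set.Icc (0:ℝ) 1 →
      (t, u) ∈ Metric.closedBall (0 : ℝ × ℝ) 2 := by
    intro t u ht hu
    rw [Metric.mem_closedBall, Prod.dist_eq]
    have h1 : dist t (0:ℝ) ≤ 2 := by
      rw [Real.dist_eq, sub_zero, _root_.abs_of_nonneg ht.1]; linarith [ht.2]
    have h2 : dist u (0:ℝ) ≤ 2 := by
      rw [Real.dist_eq, sub_zero, _root_.abs_of_nonneg hu.1]; linarith [hu.2]
    exact max_le h1 h2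
  have h01 : (0:ℝ) ∈ Set.Icc (0:ℝ) 1 := by norm_num
  have h11 : (1:ℝ) ∈ Set.Icc (0:ℝ) 1 := by norm_num
  -- periodicity
  have hper : ∀ t : ℝ, F (t, 1) = F (t, 0) := by
    intro t
    simp only [hF, hw, hkmap, mul_one, mul_zero, Real.cos_two_pi, Real.sin_two_pi,
      Real.cos_zero, Real.sin_zero]
  -- the loop-difference function
  set dl : ℝ → ℂ := fun t => G (t, 1) - G (t, 0) with hdl
  have hG1c : ContinuousOn (fun t : ℝ => G (t, 1)) (Set.Icc 0 1) := by
    apply hGc.comp (Continuous.continuousOn (by fun_prop))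
    intro t ht
    exact hmem t 1 ht h11
  have hG0c : ContinuousOn (fun t : ℝ => G (t, 0)) (Set.Icc 0 1) := by
    apply hGc.comp (Continuous.continuousOn (by fun_prop))
    intro t ht
    exact hmem t 0 ht h01
  have hdlc : ContinuousOn dl (Set.Icc 0 1) := hG1c.sub hG0c
  have hdlone : ∀ t ∈ Set.Icc (0:ℝ) 1, Complex.exp (dl t) = 1 := by
    intro t ht
    rw [hdl]
    simp only []
    rw [Complex.exp_sub, hGe _ (hmem t 1 ht h11), hGe _ (hmem t 0 ht h01), hper t,
      div_self (hFne _)]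
  have hdlat : ∀ t ∈ Set.Icc (0:ℝ) 1, ∃ k : ℤ, dl t - dl 0 = (k:ℂ) * (2 * Real.pi * I) := by
    intro t ht
    obtain ⟨k1, hk1⟩ := Complex.exp_eq_one_iff.mp (hdlone t ht)
    obtain ⟨k0, hk0⟩ := Complex.exp_eq_one_iff.mp (hdlone 0 h01)
    exact ⟨k1 - k0, by push_cast; linear_combination hk1 - hk0⟩
  have hdlconst : dl 1 = dl 0 := lattice_const dl hdlc hdlat
  -- north pole
  have hNper : ∀ y : ℝ, kmap 0 y = kmap 0 0 := by
    intro y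
    funext a
    fin_cases a <;> simp [hkmap]
  obtain ⟨hvN, heqN⟩ := hE (kmap 0 0) (hksph 0 0)
  have h0N := congrFun heqN 0
  have h1N := congrFun heqN 1
  have h2N := congrFun heqN 2
  rw [crossC_apply] at h0N h1N h2N
  simp only [hkmap, Matrix.cons_val_zero, Matrix.cons_val_one, Matrix.head_cons,
    Matrix.cons_val_two, Matrix.tail_cons, Real.sin_zero, Real.cos_zero, zero_mul, mul_one,
    Complex.ofReal_zero, Complex.ofReal_one, one_mul, mul_zero, zero_sub, sub_zero] at h0N h1N h2N
  have hk00 : kmap 0 0 = ![(0:ℝ), 0, 1] := by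
    funext a
    fin_cases a <;> simp [hkmap]
  rw [← hk00] at h0N h1N h2N
  have hv1N : E (kmap 0 0) 1 = I * (s:ℂ) * E (kmap 0 0) 0 := by linear_combination -h0N
  have hv2N : E (kmap 0 0) 2 = 0 := by
    have h2' : (-I * (s:ℂ)) * E (kmap 0 0) 2 = 0 := by linear_combination -h2N
    have hIs : (-I * (s:ℂ)) ≠ 0 := by simp [Complex.I_ne_zero, hsC]
    exact (mul_eq_zero.mp h2').resolve_left hIs
  have hv0N : E (kmap 0 0) 0 ≠ 0 := by
    intro h
    apply hvN
    funext a
    fin_cases a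
    · exact h
    · show E (kmap 0 0) 1 = 0
      rw [hv1N, h, mul_zero]
    · exact hv2N
  have hF0 : ∀ u : ℝ, F (0, u) = E (kmap 0 0) 0
      * Complex.exp (I * (s:ℂ) * ((2 * Real.pi * u : ℝ):ℂ)) := by
    intro u
    have hstep : F (0, u) = ((Real.cos (2*Real.pi*u) : ℝ):ℂ) * E (kmap 0 0) 0
        + ((Real.sin (2*Real.pi*u) : ℝ):ℂ) * E (kmap 0 0) 1 := by
      simp only [hF, hw, mul_zero]
      rw [hNper (2*Real.pi*u)]
      simp [Real.cos_zero, Real.sin_zero]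
    rw [hstep, hv1N, cis_id s hs (2*Real.pi*u)]
    push_cast
    ring
  have hdl0 : dl 0 = I * (s:ℂ) * ((2 * Real.pi : ℝ):ℂ) := by
    set psi : ℝ → ℂ := fun u => G (0, u) - I * (s:ℂ) * ((2 * Real.pi * u : ℝ):ℂ) with hpsi
    have hpsic : ContinuousOn psi (Set.Icc 0 1) := by
      apply ContinuousOn.sub
      · apply hGc.comp (Continuous.continuousOn (by fun_prop))
        intro u hu
        exact hmem 0 u h01 hu
      · apply Continuous.continuousOn
        fun_prop
    have hpsiexp : ∀ u ∈ Set.Icc (0:ℝ) 1, Complex.exp (psi u) = E (kmap 0 0) 0 := by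
      intro u hu
      rw [hpsi]
      simp only []
      rw [Complex.exp_sub, hGe _ (hmem 0 u h01 hu), hF0 u, mul_div_assoc,
        div_self (Complex.exp_ne_zero _), mul_one]
    have hlat : ∀ u ∈ Set.Icc (0:ℝ) 1, ∃ k : ℤ, psi u - psi 0 = (k:ℂ) * (2 * Real.pi * I) := by
      intro u hu
      have : Complex.exp (psi u - psi 0) = 1 := by
        rw [Complex.exp_sub, hpsiexp u hu, hpsiexp 0 h01, div_self hv0N]
      exact Complex.exp_eq_one_iff.mp this
    have hpsi1 : psi 1 = psi 0 := lattice_const psi hpsic hlat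
    rw [hpsi] at hpsi1
    simp only [] at hpsi1
    rw [hdl]
    simp only []
    push_cast at hpsi1 ⊢
    linear_combination hpsi1
  -- south pole
  have hSper : ∀ y : ℝ, kmap Real.pi y = kmap Real.pi 0 := by
    intro y
    funext a
    fin_cases a <;> simp [hkmap, Real.sin_pi]
  obtain ⟨hvS, heqS⟩ := hE (kmap Real.pi 0) (hksph Real.pi 0)
  have h0S := congrFun heqS 0
  have h1S := congrFun heqS 1
  have h2S := congrFun heqS 2
  rw [crossC_apply] at h0S h1S h2S
  simp only [hkmap, Matrix.cons_val_zero, Matrix.cons_val_one, Matrix.head_cons,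
    Matrix.cons_val_two, Matrix.tail_cons, Real.sin_pi, Real.cos_pi, zero_mul, mul_one,
    Complex.ofReal_zero, Complex.ofReal_one, Complex.ofReal_neg, one_mul, mul_zero, zero_sub,
    sub_zero, neg_mul, neg_neg] at h0S h1S h2S
  have hkS0 : kmap Real.pi 0 = ![(0:ℝ), 0, -1] := by
    funext a
    fin_cases a <;> simp [hkmap]
  rw [← hkS0] at h0S h1S h2S
  have hv1S : E (kmap Real.pi 0) 1 = -(I * (s:ℂ)) * E (kmap Real.pi 0) 0 := by
    linear_combination h0S
  have hv2S : E (kmap Real.pi 0) 2 = 0 := by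
    have h2' : (-I * (s:ℂ)) * E (kmap Real.pi 0) 2 = 0 := by linear_combination -h2S
    have hIs : (-I * (s:ℂ)) ≠ 0 := by simp [Complex.I_ne_zero, hsC]
    exact (mul_eq_zero.mp h2').resolve_left hIs
  have hv0S : E (kmap Real.pi 0) 0 ≠ 0 := by
    intro h
    apply hvS
    funext a
    fin_cases a
    · exact h
    · show E (kmap Real.pi 0) 1 = 0
      rw [hv1S, h, mul_zero]
    · exact hv2S
  have hsneg : -s = 1 ∨ -s = -1 := by
    rcases hs with h | h <;> [right; left] <;> rw [h] <;> norm_num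
  have hF1 : ∀ u : ℝ, F (1, u) = -(E (kmap Real.pi 0) 0)
      * Complex.exp (I * ((-s:ℝ):ℂ) * ((2 * Real.pi * u : ℝ):ℂ)) := by
    intro u
    have hstep : F (1, u) = -((Real.cos (2*Real.pi*u) : ℝ):ℂ) * E (kmap Real.pi 0) 0
        - ((Real.sin (2*Real.pi*u) : ℝ):ℂ) * E (kmap Real.pi 0) 1 := by
      simp only [hF, hw, mul_one]
      rw [hSper (2*Real.pi*u)]
      push_cast [Real.cos_pi, Real.sin_pi]
      ring
    rw [hstep, hv1S, cis_id (-s) hsneg (2*Real.pi*u)]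
    push_cast
    ring
  have hdl1 : dl 1 = -(I * (s:ℂ) * ((2 * Real.pi : ℝ):ℂ)) := by
    set psi : ℝ → ℂ := fun u => G (1, u) + I * (s:ℂ) * ((2 * Real.pi * u : ℝ):ℂ) with hpsi
    have hpsic : ContinuousOn psi (Set.Icc 0 1) := by
      apply ContinuousOn.add
      · apply hGc.comp (Continuous.continuousOn (by fun_prop))
        intro u hu
        exact hmem 1 u h11 hu
      · apply Continuous.continuousOn
        fun_prop
    have hpsiexp : ∀ u ∈ Set.Icc (0:ℝ) 1, Complex.exp (psi u) = -(E (kmap Real.pi 0) 0) := by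
      intro u hu
      rw [hpsi]
      simp only []
      rw [Complex.exp_add, hGe _ (hmem 1 u h11 hu), hF1 u, mul_assoc, ← Complex.exp_add]
      have : I * ((-s:ℝ):ℂ) * ((2 * Real.pi * u : ℝ):ℂ)
          + I * (s:ℂ) * ((2 * Real.pi * u : ℝ):ℂ) = 0 := by push_cast; ring
      rw [this, Complex.exp_zero, mul_one]
    have hlat : ∀ u ∈ Set.Icc (0:ℝ) 1, ∃ k : ℤ, psi u - psi 0 = (k:ℂ) * (2 * Real.pi * I) := by
      intro u hu
      have hne0 : -(E (kmap Real.pi 0) 0) ≠ 0 := neg_ne_zero.mpr hv0S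
      have : Complex.exp (psi u - psi 0) = 1 := by
        rw [Complex.exp_sub, hpsiexp u hu, hpsiexp 0 h01, div_self hne0]
      exact Complex.exp_eq_one_iff.mp this
    have hpsi1 : psi 1 = psi 0 := lattice_const psi hpsic hlat
    rw [hpsi] at hpsi1
    simp only [] at hpsi1
    rw [hdl]
    simp only []
    push_cast at hpsi1 ⊢
    linear_combination hpsi1
  -- contradiction
  rw [hdl1, hdl0] at hdlconst
  have h4 : (4:ℂ) * I * (s:ℂ) * ((Real.pi : ℝ):ℂ) = 0 := by
    push_cast at hdlconst ⊢
    linear_combination -hdlconst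
  have h4ne : (4:ℂ) * I * (s:ℂ) * ((Real.pi : ℝ):ℂ) ≠ 0 := by
    apply mul_ne_zero
    apply mul_ne_zero
    apply mul_ne_zero
    · norm_num
    · exact Complex.I_ne_zero
    · exact hsC
    · exact hpiC
  exact h4ne h4
end

section
/- The components of the helicity quasi-angular momentum commute: for every smooth F : ℝ³∖{0} → ℂ³, every k ≠ 0, and all a, b ∈ {1,2,3}, (J∥ₐ(J∥_b F))(k) = (J∥_b(J∥ₐ F))(k). Hence ([J∥ₐ, J∥_b] = 0, so the components of J∥ generate a three-dimensional translational symmetry rather than satisfying angular momentum commutation relations, and J∥ is not a true angular momentum operator. -/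
open scoped BigOperators

/-- The `a`-th component of the total angular momentum operator on `ℂ³`-valued fields
over momentum space:
`(Jₐ F)(k) = -i Σ_{b,c} ε_{abc} k_b ∂F/∂k_c (k) - i eₐ ×_ℂ F(k)`. -/
noncomputable def Jop (a : Fin 3) (F : (Fin 3 → ℝ) → (Fin 3 → ℂ)) (k : Fin 3 → ℝ) :
    Fin 3 → ℂ := fun n =>
  -Complex.I * ∑ b, ∑ c, (levicivita a b c : ℂ) * (k b : ℂ) *
      fderiv ℝ F k (Pi.single c 1) n
    - Complex.I * ∑ c, (levicivita n a c : ℂ) * F k c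

/-- The `a`-th component of the helicity quasi-angular momentum
`(J∥ₐ F)(k) = (kₐ/|k|²) Σ_b k_b (J_b F)(k)`. -/
noncomputable def Jpar (a : Fin 3) (F : (Fin 3 → ℝ) → (Fin 3 → ℂ)) (k : Fin 3 → ℝ) :
    Fin 3 → ℂ := fun n =>
  ((k a / (∑ b, (k b) ^ 2) : ℝ) : ℂ) * ∑ b, (k b : ℂ) * Jop b F k n


/-- `Jpar` is a purely pointwise operator: the orbital (derivative) terms cancel
by antisymmetry of the Levi-Civita symbol. -/
lemma Jpar_apply (a : Fin 3) (G : (Fin 3 → ℝ) → (Fin 3 → ℂ)) (k : Fin 3 → ℝ) (m : Fin 3) :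
    Jpar a G k m = ((k a / (∑ j, (k j) ^ 2) : ℝ) : ℂ) * (-Complex.I) *
      ∑ p, ∑ q, (levicivita m p q : ℂ) * (k p : ℂ) * G k q := by
  fin_cases m <;>
  · simp only [Jpar, Jop, Fin.sum_univ_three]
    norm_num [levicivita]
    ring

/-- The components of the helicity quasi-angular momentum commute:
`[J∥ₐ, J∥_b] = 0` on smooth fields over `ℝ³∖{0}`.  Hence they generate a
three-dimensional translational symmetry rather than satisfying angular momentum
commutation relations, so `J∥` is not a true angular momentum operator. -/
theorem helicity_quasi_angular_momentum_components_commute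
    (F : (Fin 3 → ℝ) → (Fin 3 → ℂ)) (hF : ContDiffOn ℝ (⊤ : ℕ∞) F {(0 : Fin 3 → ℝ)}ᶜ)
    (k : Fin 3 → ℝ) (hk : k ≠ 0) (a b : Fin 3) :
    Jpar a (fun k' => Jpar b F k') k = Jpar b (fun k' => Jpar a F k') k := by
  funext n
  simp only [Jpar_apply, Fin.sum_univ_three]
  ring
end
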